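/- arXiv:1909.03497 — 5 statements merged into one kernel-verified Lean document; each statement's English description precedes it below -/
import Mathlib

section
/- Suppose f : [0,T] → V* is continuously differentiable, (u,p) solves the two-field system with u continuously differentiable and p continuously differentiable, and (ū,p̄) solves the delay two-field system with ū continuously differentiable and p̄ twice continuously differentiable on [−τ,T], where u(0) = ū(0) and p(0) = p̄(0). Then there is a constant C depending only on c_a, c_b, c_c, C_d (in particular independent of τ, t and T) such that for all t ∈ [0,T]: ‖p̄(t) − p(t)‖_Q² ≤ C · τ² · t · M² and ‖ū(t) − u(t)‖_V² ≤ C · ( τ² ∫₀ᵗ ‖p̄′(s)‖_{H_Q}² ds + τ² (1 + τ²) · t · M² ), where M := sup_{s ∈ [−τ,t]} ‖p̄″(s)‖_{H_Q}. -/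
open Set MeasureTheory

/-!
Subtracting the two systems, `e_u = ū - u` and `e_p = p̄ - p` solve the undelayed system with zero
data and the residual `r(s) = p̄(s) - p̄(s - τ)` in the coupling term of the elliptic equation.
Differentiating the elliptic equation in time and testing it with `e_u'`, and the parabolic one
with `e_p'`, gives `d/ds b(e_p, e_p) + c_a ‖e_u'‖² ≤ C_d² ‖r'‖² / c_a`, and `‖r'‖ ≤ τ M` by the
mean value theorem for `p̄'`. Integrating bounds `‖e_p(t)‖²` and `∫₀ᵗ ‖e_u'‖²` by a multiple of
`τ² t M²`. For `t ≤ 1` this bounds `‖e_u(t)‖² ≤ t ∫₀ᵗ ‖e_u'‖²`; for `t ≥ 1` the elliptic equation at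
time `t` bounds `e_u(t)` by `e_p(t)` and `r(t)`, and `‖r(t)‖ ≤ τ sup_{[t-τ,t]} ‖p̄'‖`, where each
such value of `‖p̄'‖` lies within `(1 + τ) M` of all its values on `[t - 1, t]`, hence is controlled
by `∫₀ᵗ ‖p̄'‖²`.
-/

section Calculus

variable {E : Type*} [NormedAddCommGroup E]

theorem sq_intervalIntegral_le_mul_integral_sq {g : ℝ → ℝ} {a b : ℝ} (hab : a ≤ b)
    (hg : IntervalIntegrable g volume a b)
    (hg2 : IntervalIntegrable (fun x => g x ^ 2) volume a b) :
    (∫ x in a..b, g x) ^ 2 ≤ (b - a) * ∫ x in a..b, g x ^ 2 := by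
  obtain rfl | hlt := hab.eq_or_lt
  · simp
  have : IsFiniteMeasure (volume.restrict (uIoc a b)) := by rw [uIoc_of_le hab]; infer_instance
  have : NeZero (volume.restrict (uIoc a b)) := ⟨by simp [uIoc_of_le hab, hlt]⟩
  have hJensen : (⨍ x in a..b, g x) ^ 2 ≤ ⨍ x in a..b, g x ^ 2 :=
    (even_two.convexOn_pow (𝕜 := ℝ)).map_average_le (continuousOn_pow 2)
      isClosed_univ (.of_forall fun _ => mem_univ _) hg.def' hg2.def'
  have hba : 0 < b - a := sub_pos.2 hlt
  rw [interval_average_eq, interval_average_eq, smul_eq_mul, smul_eq_mul, mul_pow, inv_pow,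
    ← div_eq_inv_mul, ← div_eq_inv_mul, div_le_div_iff₀ (by positivity) hba] at hJensen
  nlinarith

theorem sq_norm_le_two_mul_integral_add {F : ℝ → E} {s t L : ℝ} (ht : 1 ≤ t)
    (hF : ContinuousOn F (Icc 0 t)) (hL : ∀ σ ∈ Icc (t - 1) t, ‖F s - F σ‖ ≤ L) :
    ‖F s‖ ^ 2 ≤ 2 * (∫ σ in 0..t, ‖F σ‖ ^ 2) + 2 * L ^ 2 := by
  have hF2 : ContinuousOn (fun σ => ‖F σ‖ ^ 2) (Icc 0 t) := hF.norm.pow 2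
  have hpt : ∀ σ ∈ Icc (t - 1) t, (‖F s‖ ^ 2 - 2 * L ^ 2) / 2 ≤ ‖F σ‖ ^ 2 := by
    intro σ hσ
    have h : ‖F s‖ ≤ ‖F σ‖ + L :=
      (norm_le_norm_add_norm_sub' (F s) (F σ)).trans (by gcongr; exact hL σ hσ)
    nlinarith [mul_self_le_mul_self (norm_nonneg _) h, sq_nonneg (‖F σ‖ - L)]
  have hwindow : (‖F s‖ ^ 2 - 2 * L ^ 2) / 2 ≤ ∫ σ in (t - 1)..t, ‖F σ‖ ^ 2 := by
    simpa using intervalIntegral.integral_mono_on (μ := volume) (by linarith)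
      intervalIntegrable_const
      ((hF2.mono (Icc_subset_Icc (by linarith) le_rfl)).intervalIntegrable_of_Icc (by linarith))
      hpt
  have hmono : ∫ σ in (t - 1)..t, ‖F σ‖ ^ 2 ≤ ∫ σ in 0..t, ‖F σ‖ ^ 2 :=
    intervalIntegral.integral_mono_interval (by linarith) (by linarith) le_rfl
      (.of_forall fun _ => sq_nonneg _) (hF2.intervalIntegrable_of_Icc (by linarith))
  linarith

theorem IsCompact.le_iSup_of_continuousOn {α : Type*} [TopologicalSpace α] {f : α → ℝ}
    {K : Set α} (hK : IsCompact K) (hf : ContinuousOn f K) {x : α} (hx : x ∈ K) :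
    f x ≤ ⨆ y : K, f y :=
  le_ciSup (f := fun y : K => f y) (by simpa only [image_eq_range] using hK.bddAbove_image hf)
    ⟨x, hx⟩

variable [NormedSpace ℝ E]

theorem norm_sub_sq_le_mul_integral_norm_deriv_sq {f f' : ℝ → E} {a b : ℝ} (hab : a ≤ b)
    (hf : ContinuousOn f (Icc a b)) (hf' : ∀ x ∈ Ioo a b, HasDerivAt f (f' x) x)
    (hf'c : ContinuousOn f' (Icc a b)) :
    ‖f b - f a‖ ^ 2 ≤ (b - a) * ∫ x in a..b, ‖f' x‖ ^ 2 := by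
  have hint : IntervalIntegrable (fun x => ‖f' x‖) volume a b :=
    hf'c.norm.intervalIntegrable_of_Icc hab
  have hdisp : ‖f b - f a‖ ≤ ∫ x in a..b, ‖f' x‖ :=
    norm_sub_le_integral_of_norm_deriv_le_of_le hab hf
      (fun x hx => (hf' x hx).differentiableAt.differentiableWithinAt)
      (.of_forall fun x hx => by rw [(hf' x hx).deriv]) hint
  calc ‖f b - f a‖ ^ 2 ≤ (∫ x in a..b, ‖f' x‖) ^ 2 := pow_le_pow_left₀ (norm_nonneg _) hdisp 2
    _ ≤ _ := sq_intervalIntegral_le_mul_integral_sq hab hint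
        ((hf'c.norm.pow 2).intervalIntegrable_of_Icc hab)

theorem hasDerivAt_of_forall_hasDerivWithinAt_Icc {f f' : ℝ → E} {a b c x : ℝ}
    (hf : ∀ y ∈ Icc a b, HasDerivWithinAt f (f' y) (Icc a b) y) (hcb : c ≤ b)
    (hx : x ∈ Ioo a c) :
    HasDerivAt f (f' x) x :=
  (hf x ⟨hx.1.le, hx.2.le.trans hcb⟩).hasDerivAt (Icc_mem_nhds hx.1 (hx.2.trans_le hcb))

theorem norm_sub_delay_le {F F' : ℝ → E} {τ t M s : ℝ} (hτ : 0 ≤ τ)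
    (hF : ∀ x ∈ Icc (-τ) t, HasDerivWithinAt F (F' x) (Icc (-τ) t) x)
    (hM : ∀ x ∈ Icc (-τ) t, ‖F' x‖ ≤ M) (hs : s ∈ Icc 0 t) :
    ‖F s - F (s - τ)‖ ≤ τ * M := by
  have h := (convex_Icc (-τ) t).norm_image_sub_le_of_norm_hasDerivWithin_le hF hM
    (⟨by linarith [hs.1], by linarith [hs.2]⟩ : s - τ ∈ Icc (-τ) t)
    (⟨by linarith [hs.1], hs.2⟩ : s ∈ Icc (-τ) t)
  rwa [sub_sub_cancel, Real.norm_of_nonneg hτ, mul_comm] at h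

theorem sq_norm_sub_delay_le {F F' F'' : ℝ → E} {τ t M : ℝ} (hτ : 0 ≤ τ) (ht : 1 ≤ t)
    (hF : ∀ s ∈ Icc (-τ) t, HasDerivWithinAt F (F' s) (Icc (-τ) t) s)
    (hF' : ∀ s ∈ Icc (-τ) t, HasDerivWithinAt F' (F'' s) (Icc (-τ) t) s)
    (hM : ∀ s ∈ Icc (-τ) t, ‖F'' s‖ ≤ M) :
    ‖F t - F (t - τ)‖ ^ 2 ≤
      τ ^ 2 * (2 * (∫ s in 0..t, ‖F' s‖ ^ 2) + 2 * ((1 + τ) * M) ^ 2) := by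
  have hsub : Icc 0 t ⊆ Icc (-τ) t := Icc_subset_Icc (by linarith) le_rfl
  have hM0 : 0 ≤ M := (norm_nonneg _).trans (hM t ⟨by linarith, le_rfl⟩)
  set R := √(2 * (∫ s in 0..t, ‖F' s‖ ^ 2) + 2 * ((1 + τ) * M) ^ 2)
  have hR : ∀ s ∈ Icc (t - τ) t, ‖F' s‖ ≤ R := by
    intro s hs
    rw [← abs_norm]
    refine Real.abs_le_sqrt (sq_norm_le_two_mul_integral_add ht
      (fun x hx => ((hF' x (hsub hx)).continuousWithinAt).mono hsub) fun σ hσ => ?_)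
    calc ‖F' s - F' σ‖ ≤ M * ‖s - σ‖ :=
          (convex_Icc (-τ) t).norm_image_sub_le_of_norm_hasDerivWithin_le hF' hM
            ⟨by linarith [hσ.1], hσ.2⟩ ⟨by linarith [hs.1], hs.2⟩
      _ ≤ M * (1 + τ) := by
          gcongr
          rw [Real.norm_eq_abs, abs_le]
          constructor <;> linarith [hs.1, hs.2, hσ.1, hσ.2]
      _ = (1 + τ) * M := mul_comm _ _
  have hsub' : Icc (t - τ) t ⊆ Icc (-τ) t := Icc_subset_Icc (by linarith) le_rfl
  have hmvt := (convex_Icc (t - τ) t).norm_image_sub_le_of_norm_hasDerivWithin_le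
    (fun s hs => (hF s (hsub' hs)).mono hsub') hR
    (⟨le_rfl, by linarith⟩ : t - τ ∈ Icc (t - τ) t) (⟨by linarith, le_rfl⟩ : t ∈ Icc (t - τ) t)
  rw [sub_sub_cancel, Real.norm_of_nonneg hτ] at hmvt
  have hI : 0 ≤ ∫ s in 0..t, ‖F' s‖ ^ 2 :=
    intervalIntegral.integral_nonneg (by linarith) fun _ _ => sq_nonneg _
  calc ‖F t - F (t - τ)‖ ^ 2 ≤ (R * τ) ^ 2 := pow_le_pow_left₀ (norm_nonneg _) hmvt 2
    _ = _ := by rw [mul_pow, Real.sq_sqrt (by positivity), mul_comm]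

end Calculus

noncomputable def delayErrorConstant (c_a c_b C_d C_ι : ℝ) : ℝ :=
  1 + C_d ^ 2 / (c_a * c_b) + 8 * (C_d / c_a) ^ 2 * (1 + C_ι ^ 2 * (C_d ^ 2 / (c_a * c_b)))

theorem delayErrorConstant_pos {c_a c_b : ℝ} (hc_a : 0 < c_a) (hc_b : 0 < c_b) (C_d C_ι : ℝ) :
    0 < delayErrorConstant c_a c_b C_d C_ι := by
  unfold delayErrorConstant
  positivity

theorem sq_mul_sq_le_of_le_one {τ M t I : ℝ} (ht : 0 ≤ t) (ht1 : t ≤ 1) (hI : 0 ≤ I) :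
    (τ * M) ^ 2 * t ^ 2 ≤ τ ^ 2 * I + τ ^ 2 * (1 + τ ^ 2) * t * M ^ 2 := by
  have ht2 : (τ * M) ^ 2 * t ^ 2 ≤ (τ * M) ^ 2 * t := by gcongr; nlinarith
  nlinarith [mul_nonneg (sq_nonneg τ) hI, show 0 ≤ τ ^ 4 * t * M ^ 2 by positivity]

theorem delay_error_sum_le_of_one_le {τ M t I k : ℝ} (ht1 : 1 ≤ t) (hI : 0 ≤ I) (hk : 0 ≤ k) :
    2 * (k * ((τ * M) ^ 2 * t)) + 2 * (τ ^ 2 * (2 * I + 2 * ((1 + τ) * M) ^ 2)) ≤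
      8 * (1 + k) * (τ ^ 2 * I + τ ^ 2 * (1 + τ ^ 2) * t * M ^ 2) := by
  have hτ : (1 + τ) ^ 2 ≤ 2 * (1 + τ ^ 2) * t := by nlinarith [sq_nonneg (1 - τ)]
  have hXY : (τ * M) ^ 2 * t ≤ τ ^ 2 * (1 + τ ^ 2) * t * M ^ 2 := by
    nlinarith [show 0 ≤ τ ^ 4 * t * M ^ 2 by positivity]
  have hJ : 0 ≤ τ ^ 2 * I := by positivity
  nlinarith [mul_le_mul_of_nonneg_left hXY hk,
    mul_le_mul_of_nonneg_left hτ (sq_nonneg (τ * M)), mul_nonneg hk hJ,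
    mul_nonneg hk (show 0 ≤ τ ^ 2 * (1 + τ ^ 2) * t * M ^ 2 by positivity)]

namespace TwoField

variable {V Q H : Type*} [NormedAddCommGroup V] [NormedSpace ℝ V] [NormedAddCommGroup Q]
  [NormedSpace ℝ Q] [NormedAddCommGroup H] [NormedSpace ℝ H]
  (ι : Q →L[ℝ] H) (a : V →L[ℝ] V →L[ℝ] ℝ) (b : Q →L[ℝ] Q →L[ℝ] ℝ) (c : H →ₗ[ℝ] H →ₗ[ℝ] ℝ)
  (d : V →L[ℝ] H →L[ℝ] ℝ)

theorem sq_norm_le_of_elliptic {c_a C_d : ℝ} (hc_a : 0 < c_a) {w : V} {y : H}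
    (ha : c_a * ‖w‖ ^ 2 ≤ a w w) (hd : |d w y| ≤ C_d * ‖w‖ * ‖y‖) (hell : a w w = d w y) :
    ‖w‖ ^ 2 ≤ (C_d / c_a) ^ 2 * ‖y‖ ^ 2 := by
  rcases (norm_nonneg w).eq_or_lt with h0 | hpos
  · rw [← h0, zero_pow two_ne_zero]; positivity
  have h : c_a * ‖w‖ ≤ C_d * ‖y‖ :=
    le_of_mul_le_mul_right (by nlinarith [le_abs_self (d w y)]) hpos
  rw [div_pow, div_mul_eq_mul_div, le_div_iff₀ (by positivity)]
  nlinarith [mul_pos hc_a hpos]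

theorem two_mul_apply_le_of_error_eqs {c_a C_d : ℝ} (hc_a : 0 < c_a) {w : V} {e e' : Q} {δ : H}
    (ha : c_a * ‖w‖ ^ 2 ≤ a w w) (hc : 0 ≤ c (ι e') (ι e')) (hd : |d w δ| ≤ C_d * ‖w‖ * ‖δ‖)
    (hell : a w w = d w (ι e' - δ)) (hpar : d w (ι e') + c (ι e') (ι e') + b e e' = 0) :
    2 * b e e' ≤ C_d ^ 2 * ‖δ‖ ^ 2 / c_a - c_a * ‖w‖ ^ 2 := by
  rw [map_sub] at hell
  have hyoung : 2 * (C_d * ‖w‖ * ‖δ‖) ≤ C_d ^ 2 * ‖δ‖ ^ 2 / c_a + c_a * ‖w‖ ^ 2 := by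
    rw [div_add' _ _ _ hc_a.ne', le_div_iff₀ hc_a]
    nlinarith [sq_nonneg (C_d * ‖δ‖ - c_a * ‖w‖)]
  linarith [neg_abs_le (d w δ)]

structure IsResidualSolution (t : ℝ) (eu eu' : ℝ → V) (ep ep' : ℝ → Q) (r r' : ℝ → H) :
    Prop where
  continuousOn_eu : ContinuousOn eu (Icc 0 t)
  continuousOn_eu' : ContinuousOn eu' (Icc 0 t)
  hasDerivAt_eu : ∀ s ∈ Ioo 0 t, HasDerivAt eu (eu' s) s
  continuousOn_ep : ContinuousOn ep (Icc 0 t)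
  hasDerivAt_ep : ∀ s ∈ Ioo 0 t, HasDerivAt ep (ep' s) s
  hasDerivAt_r : ∀ s ∈ Ioo 0 t, HasDerivAt r (r' s) s
  elliptic : ∀ s ∈ Icc 0 t, ∀ v, a (eu s) v = d v (ι (ep s) - r s)
  parabolic : ∀ s ∈ Ioo 0 t, ∀ q, d (eu' s) (ι q) + c (ι (ep' s)) (ι q) + b (ep s) q = 0

variable {ι a b c d}

theorem IsResidualSolution.elliptic_deriv {t : ℝ} {eu eu' : ℝ → V} {ep ep' : ℝ → Q}
    {r r' : ℝ → H} (h : IsResidualSolution ι a b c d t eu eu' ep ep' r r') {s : ℝ}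
    (hs : s ∈ Ioo 0 t) (v : V) : a (eu' s) v = d v (ι (ep' s) - r' s) := by
  have hlhs : HasDerivAt (fun x => a (eu x) v) (a (eu' s) v) s :=
    (a.flip v).hasFDerivAt.comp_hasDerivAt s (h.hasDerivAt_eu s hs)
  have hrhs : HasDerivAt (fun x => d v (ι (ep x) - r x)) (d v (ι (ep' s) - r' s)) s :=
    (d v).hasFDerivAt.comp_hasDerivAt s
      ((ι.hasFDerivAt.comp_hasDerivAt s (h.hasDerivAt_ep s hs)).sub (h.hasDerivAt_r s hs))
  exact hlhs.unique (hrhs.congr_of_eventuallyEq (Filter.eventually_of_mem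
    (Ioo_mem_nhds hs.1 hs.2) fun x hx => h.elliptic x (Ioo_subset_Icc_self hx) v))

theorem IsResidualSolution.energy_estimate {t ρ c_a C_d : ℝ} {eu eu' : ℝ → V}
    {ep ep' : ℝ → Q} {r r' : ℝ → H} (h : IsResidualSolution ι a b c d t eu eu' ep ep' r r')
    (ht : 0 ≤ t) (hc_a : 0 < c_a) (ha : ∀ v, c_a * ‖v‖ ^ 2 ≤ a v v)
    (hb_symm : ∀ p q, b p q = b q p) (hc : ∀ q, 0 ≤ c q q)
    (hd : ∀ v q, |d v q| ≤ C_d * ‖v‖ * ‖q‖) (hr' : ∀ s ∈ Ioo 0 t, ‖r' s‖ ≤ ρ) (hep0 : ep 0 = 0) :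
    b (ep t) (ep t) + c_a * ∫ s in 0..t, ‖eu' s‖ ^ 2 ≤ C_d ^ 2 * ρ ^ 2 / c_a * t := by
  have hφ : ∀ s ∈ Ioo 0 t,
      HasDerivAt (fun x => b (ep x) (ep x)) (2 * b (ep s) (ep' s)) s := by
    intro s hs
    have := b.hasDerivWithinAt_of_bilinear (s := univ) (h.hasDerivAt_ep s hs).hasDerivWithinAt
      (h.hasDerivAt_ep s hs).hasDerivWithinAt
    rwa [hasDerivWithinAt_univ, hb_symm (ep' s), ← two_mul] at this
  have hdiss : ∀ s ∈ Ioo 0 t,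
      2 * b (ep s) (ep' s) ≤ C_d ^ 2 * ρ ^ 2 / c_a - c_a * ‖eu' s‖ ^ 2 := by
    intro s hs
    calc _ ≤ C_d ^ 2 * ‖r' s‖ ^ 2 / c_a - c_a * ‖eu' s‖ ^ 2 :=
          two_mul_apply_le_of_error_eqs ι a b c d hc_a (ha _) (hc _) (hd _ _)
            (h.elliptic_deriv hs _) (h.parabolic s hs _)
      _ ≤ _ := by gcongr; exact hr' s hs
  have hg : ContinuousOn (fun s => c_a * ‖eu' s‖ ^ 2) (Icc 0 t) :=
    continuousOn_const.mul (h.continuousOn_eu'.norm.pow 2)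
  have hFTC : b (ep t) (ep t) - b (ep 0) (ep 0) ≤
      ∫ s in 0..t, (C_d ^ 2 * ρ ^ 2 / c_a - c_a * ‖eu' s‖ ^ 2) :=
    intervalIntegral.sub_le_integral_of_hasDeriv_right_of_le ht
      ((b.continuous.comp_continuousOn h.continuousOn_ep).clm_apply h.continuousOn_ep)
      (fun s hs => (hφ s hs).hasDerivWithinAt) (continuousOn_const.sub hg).integrableOn_Icc hdiss
  rw [intervalIntegral.integral_sub intervalIntegrable_const (hg.intervalIntegrable_of_Icc ht),
    intervalIntegral.integral_const, intervalIntegral.integral_const_mul, hep0] at hFTC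
  simp only [map_zero, sub_zero, smul_eq_mul] at hFTC
  linarith

theorem IsResidualSolution.sq_norm_ep_le {t ρ c_a c_b C_d : ℝ} {eu eu' : ℝ → V}
    {ep ep' : ℝ → Q} {r r' : ℝ → H} (h : IsResidualSolution ι a b c d t eu eu' ep ep' r r')
    (ht : 0 ≤ t) (hc_a : 0 < c_a) (hc_b : 0 < c_b) (ha : ∀ v, c_a * ‖v‖ ^ 2 ≤ a v v)
    (hb_symm : ∀ p q, b p q = b q p) (hb : ∀ q, c_b * ‖q‖ ^ 2 ≤ b q q) (hc : ∀ q, 0 ≤ c q q)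
    (hd : ∀ v q, |d v q| ≤ C_d * ‖v‖ * ‖q‖) (hr' : ∀ s ∈ Ioo 0 t, ‖r' s‖ ≤ ρ)
    (hep0 : ep 0 = 0) :
    ‖ep t‖ ^ 2 ≤ C_d ^ 2 / (c_a * c_b) * (ρ ^ 2 * t) := by
  have henergy := h.energy_estimate ht hc_a ha hb_symm hc hd hr' hep0
  have hint : 0 ≤ c_a * ∫ s in 0..t, ‖eu' s‖ ^ 2 :=
    mul_nonneg hc_a.le (intervalIntegral.integral_nonneg ht fun _ _ => sq_nonneg _)
  have hK : C_d ^ 2 * ρ ^ 2 / c_a * t = c_b * (C_d ^ 2 / (c_a * c_b) * (ρ ^ 2 * t)) := by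
    field_simp
  exact le_of_mul_le_mul_left (by linarith [hb (ep t)]) hc_b

theorem IsResidualSolution.sq_norm_eu_le {t ρ c_a C_d : ℝ} {eu eu' : ℝ → V}
    {ep ep' : ℝ → Q} {r r' : ℝ → H} (h : IsResidualSolution ι a b c d t eu eu' ep ep' r r')
    (ht : 0 ≤ t) (hc_a : 0 < c_a) (ha : ∀ v, c_a * ‖v‖ ^ 2 ≤ a v v)
    (hb_symm : ∀ p q, b p q = b q p) (hb : ∀ q, 0 ≤ b q q) (hc : ∀ q, 0 ≤ c q q)
    (hd : ∀ v q, |d v q| ≤ C_d * ‖v‖ * ‖q‖) (hr' : ∀ s ∈ Ioo 0 t, ‖r' s‖ ≤ ρ)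
    (heu0 : eu 0 = 0) (hep0 : ep 0 = 0) :
    ‖eu t‖ ^ 2 ≤ (C_d / c_a) ^ 2 * (ρ ^ 2 * t ^ 2) := by
  have henergy := h.energy_estimate ht hc_a ha hb_symm hc hd hr' hep0
  have hK : C_d ^ 2 * ρ ^ 2 / c_a * t = c_a * ((C_d / c_a) ^ 2 * ρ ^ 2 * t) := by field_simp
  have hint : ∫ s in 0..t, ‖eu' s‖ ^ 2 ≤ (C_d / c_a) ^ 2 * ρ ^ 2 * t :=
    le_of_mul_le_mul_left (by linarith [hb (ep t)]) hc_a
  have hcs := norm_sub_sq_le_mul_integral_norm_deriv_sq ht h.continuousOn_eu h.hasDerivAt_eu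
    h.continuousOn_eu'
  rw [heu0, sub_zero, sub_zero] at hcs
  calc ‖eu t‖ ^ 2 ≤ t * ((C_d / c_a) ^ 2 * ρ ^ 2 * t) := hcs.trans (by gcongr)
    _ = _ := by ring

theorem IsResidualSolution.sq_norm_eu_le_of_elliptic {t c_a C_d C_ι : ℝ} {eu eu' : ℝ → V}
    {ep ep' : ℝ → Q} {r r' : ℝ → H} (h : IsResidualSolution ι a b c d t eu eu' ep ep' r r')
    (ht : 0 ≤ t) (hc_a : 0 < c_a) (hι : ∀ q, ‖ι q‖ ≤ C_ι * ‖q‖)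
    (ha : ∀ v, c_a * ‖v‖ ^ 2 ≤ a v v) (hd : ∀ v q, |d v q| ≤ C_d * ‖v‖ * ‖q‖) :
    ‖eu t‖ ^ 2 ≤ (C_d / c_a) ^ 2 * (2 * (C_ι ^ 2 * ‖ep t‖ ^ 2) + 2 * ‖r t‖ ^ 2) := by
  refine (sq_norm_le_of_elliptic a d hc_a (ha _) (hd _ _) (h.elliptic t ⟨ht, le_rfl⟩ _)).trans ?_
  gcongr
  calc ‖ι (ep t) - r t‖ ^ 2 ≤ (‖ι (ep t)‖ + ‖r t‖) ^ 2 := by gcongr; exact norm_sub_le _ _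
    _ ≤ 2 * (‖ι (ep t)‖ ^ 2 + ‖r t‖ ^ 2) := add_sq_le
    _ ≤ 2 * ((C_ι * ‖ep t‖) ^ 2 + ‖r t‖ ^ 2) := by gcongr; exact hι _
    _ = _ := by ring

theorem IsResidualSolution.error_bounds {t τ M I c_a c_b C_d C_ι : ℝ} {eu eu' : ℝ → V}
    {ep ep' : ℝ → Q} {r r' : ℝ → H} (h : IsResidualSolution ι a b c d t eu eu' ep ep' r r')
    (ht : 0 ≤ t) (hc_a : 0 < c_a) (hc_b : 0 < c_b) (hι : ∀ q, ‖ι q‖ ≤ C_ι * ‖q‖)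
    (ha : ∀ v, c_a * ‖v‖ ^ 2 ≤ a v v) (hb_symm : ∀ p q, b p q = b q p)
    (hb : ∀ q, c_b * ‖q‖ ^ 2 ≤ b q q) (hc : ∀ q, 0 ≤ c q q)
    (hd : ∀ v q, |d v q| ≤ C_d * ‖v‖ * ‖q‖) (heu0 : eu 0 = 0) (hep0 : ep 0 = 0)
    (hr' : ∀ s ∈ Ioo 0 t, ‖r' s‖ ≤ τ * M)
    (hr : 1 ≤ t → ‖r t‖ ^ 2 ≤ τ ^ 2 * (2 * I + 2 * ((1 + τ) * M) ^ 2)) (hI : 0 ≤ I) :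
    ‖ep t‖ ^ 2 ≤ delayErrorConstant c_a c_b C_d C_ι * τ ^ 2 * t * M ^ 2 ∧
      ‖eu t‖ ^ 2 ≤ delayErrorConstant c_a c_b C_d C_ι *
        (τ ^ 2 * I + τ ^ 2 * (1 + τ ^ 2) * t * M ^ 2) := by
  have hep := h.sq_norm_ep_le ht hc_a hc_b ha hb_symm hb hc hd hr' hep0
  set A := (C_d / c_a) ^ 2
  set B := C_d ^ 2 / (c_a * c_b)
  set C := delayErrorConstant c_a c_b C_d C_ι
  have hA : 0 ≤ A := by positivity
  have hB : 0 ≤ B := by positivity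
  have hk : 0 ≤ C_ι ^ 2 * B := by positivity
  have hC : C = 1 + B + 8 * A * (1 + C_ι ^ 2 * B) := rfl
  have hAk : 0 ≤ A * (C_ι ^ 2 * B) := mul_nonneg hA hk
  refine ⟨?_, ?_⟩
  · calc ‖ep t‖ ^ 2 ≤ B * ((τ * M) ^ 2 * t) := hep
      _ ≤ C * ((τ * M) ^ 2 * t) := by gcongr; linarith
      _ = C * τ ^ 2 * t * M ^ 2 := by ring
  rcases le_total t 1 with ht1 | ht1
  · calc ‖eu t‖ ^ 2 ≤ A * ((τ * M) ^ 2 * t ^ 2) :=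
          h.sq_norm_eu_le ht hc_a ha hb_symm (fun q => (mul_nonneg hc_b.le (sq_nonneg _)).trans
            (hb q)) hc hd hr' heu0 hep0
      _ ≤ A * (τ ^ 2 * I + τ ^ 2 * (1 + τ ^ 2) * t * M ^ 2) := by
          gcongr; exact sq_mul_sq_le_of_le_one ht ht1 hI
      _ ≤ C * _ := by gcongr; linarith
  · calc ‖eu t‖ ^ 2 ≤ A * (2 * (C_ι ^ 2 * ‖ep t‖ ^ 2) + 2 * ‖r t‖ ^ 2) :=
          h.sq_norm_eu_le_of_elliptic ht hc_a hι ha hd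
      _ ≤ A * (2 * (C_ι ^ 2 * B * ((τ * M) ^ 2 * t)) +
          2 * (τ ^ 2 * (2 * I + 2 * ((1 + τ) * M) ^ 2))) := by
          rw [mul_assoc (C_ι ^ 2)]; gcongr; exact hr ht1
      _ ≤ A * (8 * (1 + C_ι ^ 2 * B) * (τ ^ 2 * I + τ ^ 2 * (1 + τ ^ 2) * t * M ^ 2)) := by
          gcongr; exact delay_error_sum_le_of_one_le ht1 hI hk
      _ = 8 * A * (1 + C_ι ^ 2 * B) * (τ ^ 2 * I + τ ^ 2 * (1 + τ ^ 2) * t * M ^ 2) := by ring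
      _ ≤ C * _ := by gcongr; linarith

theorem isResidualSolution_delay {T τ t : ℝ} (hτ : 0 ≤ τ) (htT : t ≤ T)
    {u u' ubar ubar' : ℝ → V} {p p' pbar pbar' : ℝ → Q}
    (hu : ∀ s ∈ Icc 0 T, HasDerivWithinAt u (u' s) (Icc 0 T) s) (hu' : ContinuousOn u' (Icc 0 T))
    (hp : ∀ s ∈ Icc 0 T, HasDerivWithinAt p (p' s) (Icc 0 T) s)
    (hubar : ∀ s ∈ Icc 0 T, HasDerivWithinAt ubar (ubar' s) (Icc 0 T) s)
    (hubar' : ContinuousOn ubar' (Icc 0 T))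
    (hpbar : ∀ s ∈ Icc (-τ) T, HasDerivWithinAt pbar (pbar' s) (Icc (-τ) T) s)
    (hell : ∀ s ∈ Icc 0 T, ∀ v,
      a (ubar s) v - d v (ι (pbar (s - τ))) = a (u s) v - d v (ι (p s)))
    (hpar : ∀ s ∈ Icc 0 T, ∀ q, d (ubar' s) (ι q) + c (ι (pbar' s)) (ι q) + b (pbar s) q =
      d (u' s) (ι q) + c (ι (p' s)) (ι q) + b (p s) q) :
    IsResidualSolution ι a b c d t (fun s => ubar s - u s) (fun s => ubar' s - u' s)
      (fun s => pbar s - p s) (fun s => pbar' s - p' s)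
      (fun s => ι (pbar s) - ι (pbar (s - τ))) (fun s => ι (pbar' s) - ι (pbar' (s - τ))) := by
  have h0t : Icc 0 t ⊆ Icc 0 T := Icc_subset_Icc_right htT
  have hpbar_at : ∀ s ∈ Ioo (-τ) t, HasDerivAt pbar (pbar' s) s := fun s hs =>
    hasDerivAt_of_forall_hasDerivWithinAt_Icc hpbar htT hs
  refine ⟨((HasDerivWithinAt.continuousOn hubar).sub (HasDerivWithinAt.continuousOn hu)).mono h0t,
    (hubar'.sub hu').mono h0t,
    fun s hs => (hasDerivAt_of_forall_hasDerivWithinAt_Icc hubar htT hs).sub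
      (hasDerivAt_of_forall_hasDerivWithinAt_Icc hu htT hs),
    ((HasDerivWithinAt.continuousOn hpbar).mono (Icc_subset_Icc (by linarith) htT)).sub
      ((HasDerivWithinAt.continuousOn hp).mono h0t),
    fun s hs => (hpbar_at s ⟨by linarith [hs.1], hs.2⟩).sub
      (hasDerivAt_of_forall_hasDerivWithinAt_Icc hp htT hs),
    fun s hs => (ι.hasFDerivAt.comp_hasDerivAt s (hpbar_at s ⟨by linarith [hs.1], hs.2⟩)).sub
      (ι.hasFDerivAt.comp_hasDerivAt s
        ((hpbar_at (s - τ) ⟨by linarith [hs.1], by linarith [hs.2]⟩).comp_sub_const s τ)),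
    fun s hs v => ?_, fun s hs q => ?_⟩
  · have := hell s (h0t hs) v
    simp only [map_sub, sub_apply]
    linarith
  · have := hpar s (h0t (Ioo_subset_Icc_self hs)) q
    simp only [map_sub, sub_apply, LinearMap.sub_apply]
    linarith

end TwoField

theorem stmt1_general {V Q HQ : Type*}
    [NormedAddCommGroup V] [InnerProductSpace ℝ V]
    [NormedAddCommGroup Q] [InnerProductSpace ℝ Q]
    [NormedAddCommGroup HQ] [InnerProductSpace ℝ HQ]
    -- continuous embeddings V ↪ H_V and Q ↪ H_Q
    (ιQ : Q →L[ℝ] HQ)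
    (C_QH : ℝ)
    (hCQH : ∀ q : Q, ‖ιQ q‖ ≤ C_QH * ‖q‖)
    -- the bilinear forms and their constants
    (a : V →ₗ[ℝ] V →ₗ[ℝ] ℝ) (b : Q →ₗ[ℝ] Q →ₗ[ℝ] ℝ)
    (c : HQ →ₗ[ℝ] HQ →ₗ[ℝ] ℝ) (d : V →ₗ[ℝ] HQ →ₗ[ℝ] ℝ)
    (c_a C_a c_b C_b c_c C_d : ℝ)
    (hc_a : 0 < c_a) (hc_b : 0 < c_b) (hc_c : 0 < c_c)
    (ha_coer : ∀ v : V, c_a * ‖v‖ ^ 2 ≤ a v v)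
    (ha_bdd : ∀ u v : V, |a u v| ≤ C_a * ‖u‖ * ‖v‖)
    (hb_symm : ∀ p q : Q, b p q = b q p)
    (hb_coer : ∀ q : Q, c_b * ‖q‖ ^ 2 ≤ b q q)
    (hb_bdd : ∀ p q : Q, |b p q| ≤ C_b * ‖p‖ * ‖q‖)
    (hc_coer : ∀ q : HQ, c_c * ‖q‖ ^ 2 ≤ c q q)
    (hd_bdd : ∀ (v : V) (q : HQ), |d v q| ≤ C_d * ‖v‖ * ‖q‖) :
    ∃ C : ℝ, 0 < C ∧
      ∀ (T τ : ℝ), 0 < T → 0 < τ →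
      ∀ (f f' : ℝ → V →L[ℝ] ℝ) (g : ℝ → Q →L[ℝ] ℝ)
        (u u' : ℝ → V) (p p' : ℝ → Q)
        (ubar ubar' : ℝ → V) (pbar pbar' pbar'' : ℝ → Q),
        -- data: f continuously differentiable, g continuous
        (∀ t ∈ Icc (0:ℝ) T, HasDerivWithinAt f (f' t) (Icc 0 T) t) →
        ContinuousOn f (Icc 0 T) → ContinuousOn f' (Icc 0 T) → ContinuousOn g (Icc 0 T) →
        -- (u,p) is a C¹ solution of the two-field system
        (∀ t ∈ Icc (0:ℝ) T, HasDerivWithinAt u (u' t) (Icc 0 T) t) →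
        ContinuousOn u' (Icc 0 T) →
        (∀ t ∈ Icc (0:ℝ) T, HasDerivWithinAt p (p' t) (Icc 0 T) t) →
        ContinuousOn p' (Icc 0 T) →
        (∀ t ∈ Icc (0:ℝ) T, ∀ v : V, a (u t) v - d v (ιQ (p t)) = f t v) →
        (∀ t ∈ Icc (0:ℝ) T, ∀ q : Q,
          d (u' t) (ιQ q) + c (ιQ (p' t)) (ιQ q) + b (p t) q = g t q) →
        -- (ū,p̄) is a solution of the delay system, ū ∈ C¹([0,T]), p̄ ∈ C²([−τ,T])
        (∀ t ∈ Icc (0:ℝ) T, HasDerivWithinAt ubar (ubar' t) (Icc 0 T) t) →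
        ContinuousOn ubar' (Icc 0 T) →
        (∀ t ∈ Icc (-τ) T, HasDerivWithinAt pbar (pbar' t) (Icc (-τ) T) t) →
        (∀ t ∈ Icc (-τ) T, HasDerivWithinAt pbar' (pbar'' t) (Icc (-τ) T) t) →
        ContinuousOn pbar' (Icc (-τ) T) → ContinuousOn pbar'' (Icc (-τ) T) →
        (∀ t ∈ Icc (0:ℝ) T, ∀ v : V, a (ubar t) v - d v (ιQ (pbar (t - τ))) = f t v) →
        (∀ t ∈ Icc (0:ℝ) T, ∀ q : Q,
          d (ubar' t) (ιQ q) + c (ιQ (pbar' t)) (ιQ q) + b (pbar t) q = g t q) →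
        -- matching initial values
        u 0 = ubar 0 → p 0 = pbar 0 →
        ∀ t ∈ Icc (0:ℝ) T,
          ‖pbar t - p t‖ ^ 2 ≤
              C * τ ^ 2 * t * (⨆ s : Icc (-τ) t, ‖ιQ (pbar'' (s : ℝ))‖) ^ 2 ∧
          ‖ubar t - u t‖ ^ 2 ≤
              C * (τ ^ 2 * (∫ s in (0:ℝ)..t, ‖ιQ (pbar' s)‖ ^ 2) +
                τ ^ 2 * (1 + τ ^ 2) * t *
                  (⨆ s : Icc (-τ) t, ‖ιQ (pbar'' (s : ℝ))‖) ^ 2) := by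
  refine ⟨delayErrorConstant c_a c_b C_d C_QH, delayErrorConstant_pos hc_a hc_b C_d C_QH, ?_⟩
  intro T τ _ hτ f f' g u u' p p' ubar ubar' pbar pbar' pbar'' _ _ _ _ hu hu' hp _ hell hpar
    hubar hubar' hpbar hpbar' _ hpbar'' hell_delay hpar_delay hu0 hp0 t ht
  have hsub : Icc (-τ) t ⊆ Icc (-τ) T := Icc_subset_Icc_right ht.2
  have hF : ∀ s ∈ Icc (-τ) t,
      HasDerivWithinAt (fun x => ιQ (pbar x)) (ιQ (pbar' s)) (Icc (-τ) t) s :=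
    fun s hs => ιQ.hasFDerivAt.comp_hasDerivWithinAt s ((hpbar s (hsub hs)).mono hsub)
  have hF' : ∀ s ∈ Icc (-τ) t,
      HasDerivWithinAt (fun x => ιQ (pbar' x)) (ιQ (pbar'' s)) (Icc (-τ) t) s :=
    fun s hs => ιQ.hasFDerivAt.comp_hasDerivWithinAt s ((hpbar' s (hsub hs)).mono hsub)
  have hM : ∀ s ∈ Icc (-τ) t, ‖ιQ (pbar'' s)‖ ≤ ⨆ s : Icc (-τ) t, ‖ιQ (pbar'' (s : ℝ))‖ :=
    fun s hs => isCompact_Icc.le_iSup_of_continuousOn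
      (ιQ.continuous.comp_continuousOn (hpbar''.mono hsub)).norm hs
  have hsol := TwoField.isResidualSolution_delay (ι := ιQ) (a := a.mkContinuous₂ C_a ha_bdd)
    (b := b.mkContinuous₂ C_b hb_bdd) (c := c) (d := d.mkContinuous₂ C_d hd_bdd) hτ.le ht.2
    hu hu' hp hubar hubar' hpbar (fun s hs v => (hell_delay s hs v).trans (hell s hs v).symm)
    (fun s hs q => (hpar_delay s hs q).trans (hpar s hs q).symm)
  exact hsol.error_bounds ht.1 hc_a hc_b hCQH ha_coer hb_symm hb_coer
    (fun q => (mul_nonneg hc_c.le (sq_nonneg _)).trans (hc_coer q)) hd_bdd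
    (sub_eq_zero.2 hu0.symm) (sub_eq_zero.2 hp0.symm)
    (fun s hs => norm_sub_delay_le hτ.le hF' hM (Ioo_subset_Icc_self hs))
    (fun ht1 => sq_norm_sub_delay_le hτ.le ht1 hF hF' hM)
    (intervalIntegral.integral_nonneg ht.1 fun _ _ => sq_nonneg _)

/-- The solutions of the weakly coupled elliptic–parabolic two-field system and of the
associated delay system (delay `τ` in the coupling of the elliptic equation) differ by
`O(τ)`: there is a constant `C` depending only on the constants of the bilinear forms
(in particular independent of `τ`, `t` and `T`) such that
`‖p̄(t) − p(t)‖_Q² ≤ C τ² t M²` and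
`‖ū(t) − u(t)‖_V² ≤ C (τ² ∫₀ᵗ ‖p̄′‖_{H_Q}² + τ²(1+τ²) t M²)`,
where `M = sup_{[−τ,t]} ‖p̄″‖_{H_Q}`. -/
theorem stmt1 {V HV Q HQ : Type*}
    [NormedAddCommGroup V] [InnerProductSpace ℝ V] [CompleteSpace V]
    [NormedAddCommGroup HV] [InnerProductSpace ℝ HV] [CompleteSpace HV]
    [NormedAddCommGroup Q] [InnerProductSpace ℝ Q] [CompleteSpace Q]
    [NormedAddCommGroup HQ] [InnerProductSpace ℝ HQ] [CompleteSpace HQ]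
    -- continuous embeddings V ↪ H_V and Q ↪ H_Q
    (ιV : V →L[ℝ] HV) (hιV : Function.Injective ιV)
    (ιQ : Q →L[ℝ] HQ) (hιQ : Function.Injective ιQ)
    (C_VH C_QH : ℝ)
    (hCVH : ∀ v : V, ‖ιV v‖ ≤ C_VH * ‖v‖)
    (hCQH : ∀ q : Q, ‖ιQ q‖ ≤ C_QH * ‖q‖)
    -- the bilinear forms and their constants
    (a : V →ₗ[ℝ] V →ₗ[ℝ] ℝ) (b : Q →ₗ[ℝ] Q →ₗ[ℝ] ℝ)
    (c : HQ →ₗ[ℝ] HQ →ₗ[ℝ] ℝ) (d : V →ₗ[ℝ] HQ →ₗ[ℝ] ℝ)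
    (c_a C_a c_b C_b c_c C_c C_d C_d' : ℝ)
    (hc_a : 0 < c_a) (hc_b : 0 < c_b) (hc_c : 0 < c_c)
    (ha_symm : ∀ u v : V, a u v = a v u)
    (ha_coer : ∀ v : V, c_a * ‖v‖ ^ 2 ≤ a v v)
    (ha_bdd : ∀ u v : V, |a u v| ≤ C_a * ‖u‖ * ‖v‖)
    (hb_symm : ∀ p q : Q, b p q = b q p)
    (hb_coer : ∀ q : Q, c_b * ‖q‖ ^ 2 ≤ b q q)
    (hb_bdd : ∀ p q : Q, |b p q| ≤ C_b * ‖p‖ * ‖q‖)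
    (hc_symm : ∀ p q : HQ, c p q = c q p)
    (hc_coer : ∀ q : HQ, c_c * ‖q‖ ^ 2 ≤ c q q)
    (hc_bdd : ∀ p q : HQ, |c p q| ≤ C_c * ‖p‖ * ‖q‖)
    (hd_bdd : ∀ (v : V) (q : HQ), |d v q| ≤ C_d * ‖v‖ * ‖q‖)
    (hd_bdd' : ∀ (v : V) (q : Q), |d v (ιQ q)| ≤ C_d' * ‖ιV v‖ * ‖q‖) :
    ∃ C : ℝ, 0 < C ∧
      ∀ (T τ : ℝ), 0 < T → 0 < τ →
      ∀ (f f' : ℝ → V →L[ℝ] ℝ) (g : ℝ → Q →L[ℝ] ℝ)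
        (u u' : ℝ → V) (p p' : ℝ → Q)
        (ubar ubar' : ℝ → V) (pbar pbar' pbar'' : ℝ → Q),
        -- data: f continuously differentiable, g continuous
        (∀ t ∈ Icc (0:ℝ) T, HasDerivWithinAt f (f' t) (Icc 0 T) t) →
        ContinuousOn f (Icc 0 T) → ContinuousOn f' (Icc 0 T) → ContinuousOn g (Icc 0 T) →
        -- (u,p) is a C¹ solution of the two-field system
        (∀ t ∈ Icc (0:ℝ) T, HasDerivWithinAt u (u' t) (Icc 0 T) t) →
        ContinuousOn u' (Icc 0 T) →
        (∀ t ∈ Icc (0:ℝ) T, HasDerivWithinAt p (p' t) (Icc 0 T) t) →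
        ContinuousOn p' (Icc 0 T) →
        (∀ t ∈ Icc (0:ℝ) T, ∀ v : V, a (u t) v - d v (ιQ (p t)) = f t v) →
        (∀ t ∈ Icc (0:ℝ) T, ∀ q : Q,
          d (u' t) (ιQ q) + c (ιQ (p' t)) (ιQ q) + b (p t) q = g t q) →
        -- (ū,p̄) is a solution of the delay system, ū ∈ C¹([0,T]), p̄ ∈ C²([−τ,T])
        (∀ t ∈ Icc (0:ℝ) T, HasDerivWithinAt ubar (ubar' t) (Icc 0 T) t) →
        ContinuousOn ubar' (Icc 0 T) →
        (∀ t ∈ Icc (-τ) T, HasDerivWithinAt pbar (pbar' t) (Icc (-τ) T) t) →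
        (∀ t ∈ Icc (-τ) T, HasDerivWithinAt pbar' (pbar'' t) (Icc (-τ) T) t) →
        ContinuousOn pbar' (Icc (-τ) T) → ContinuousOn pbar'' (Icc (-τ) T) →
        (∀ t ∈ Icc (0:ℝ) T, ∀ v : V, a (ubar t) v - d v (ιQ (pbar (t - τ))) = f t v) →
        (∀ t ∈ Icc (0:ℝ) T, ∀ q : Q,
          d (ubar' t) (ιQ q) + c (ιQ (pbar' t)) (ιQ q) + b (pbar t) q = g t q) →
        -- matching initial values
        u 0 = ubar 0 → p 0 = pbar 0 →
        ∀ t ∈ Icc (0:ℝ) T,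
          ‖pbar t - p t‖ ^ 2 ≤
              C * τ ^ 2 * t * (⨆ s : Icc (-τ) t, ‖ιQ (pbar'' (s : ℝ))‖) ^ 2 ∧
          ‖ubar t - u t‖ ^ 2 ≤
              C * (τ ^ 2 * (∫ s in (0:ℝ)..t, ‖ιQ (pbar' s)‖ ^ 2) +
                τ ^ 2 * (1 + τ ^ 2) * t *
                  (⨆ s : Icc (-τ) t, ‖ιQ (pbar'' (s : ℝ))‖) ^ 2) :=
  stmt1_general ιQ C_QH hCQH a b c d c_a C_a c_b C_b c_c C_d hc_a hc_b hc_c ha_coer ha_bdd hb_symm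
    hb_coer hb_bdd hc_coer hd_bdd
end

section
/- Suppose f : [0,T] → V* is continuously differentiable, (u,p) solves the two-field system with u and p continuously differentiable, and (ū,p̄) solves the delay two-field system with ū continuously differentiable and p̄ twice continuously differentiable on [−τ,T], where u(0) = ū(0) and p(0) = p̄(0). Then there is a constant C depending only on c_a, c_b, c_c, C_d (in particular independent of τ, t and T) such that for all t ∈ [0,T]: ∫₀ᵗ ‖ū′(s) − u′(s)‖_V² ds + ‖p̄(t) − p(t)‖_Q² ≤ C · τ² · t · sup_{s ∈ [−τ,t]} ‖p̄″(s)‖_{H_Q}². -/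
/-!
Let `e = ū − u` and `r = p̄ − p`. Subtracting the two systems and differentiating the first
equation in time, the errors satisfy the two-field system with the extra forcing
`d(·, p̄′(t) − p̄′(t − τ))`, whose size is at most `τ · sup ‖p̄″‖` by the mean value theorem.
Testing with `(e′, r′)` gives the energy identity
`(d/dt) b(r, r) + 2 a(e′, e′) + 2 c(r′, r′) = −2 d(e′, p̄′(t) − p̄′(t − τ))`;
absorbing the right-hand side by Young's inequality and integrating over `[0, t]` (with
`r(0) = 0`) yields the estimate.
-/

open Set intervalIntegral

section Calculus

variable {E F G : Type*} [NormedAddCommGroup E] [NormedSpace ℝ E]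
  [NormedAddCommGroup F] [NormedSpace ℝ F] [NormedAddCommGroup G] [NormedSpace ℝ G]

theorem LinearMap.hasDerivWithinAt_of_bound (β : E →ₗ[ℝ] F →ₗ[ℝ] ℝ) {C : ℝ}
    (hβ : ∀ x y, |β x y| ≤ C * ‖x‖ * ‖y‖) {x : ℝ → E} {y : ℝ → F} {x' : E} {y' : F}
    {s : Set ℝ} {t : ℝ} (hx : HasDerivWithinAt x x' s t) (hy : HasDerivWithinAt y y' s t) :
    HasDerivWithinAt (fun σ ↦ β (x σ) (y σ)) (β (x t) y' + β x' (y t)) s t :=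
  (β.mkContinuous₂ C hβ).hasDerivWithinAt_of_bilinear hx hy

theorem HasDerivWithinAt.comp_sub_const_of_mapsTo {f : ℝ → E} {f' : E} {s t : Set ℝ} {x τ : ℝ}
    (hf : HasDerivWithinAt f f' t (x - τ)) (hst : MapsTo (· - τ) s t) :
    HasDerivWithinAt (fun σ ↦ f (σ - τ)) f' s x := by
  have := hf.scomp x ((hasDerivWithinAt_id x s).sub_const τ) hst
  rwa [one_smul] at this

theorem eq_of_hasDerivWithinAt_Icc_of_eqOn {f g : ℝ → E} {f' g' : E} {a b s : ℝ} (hab : a < b)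
    (hs : s ∈ Icc a b) (hfg : EqOn f g (Icc a b)) (hf : HasDerivWithinAt f f' (Icc a b) s)
    (hg : HasDerivWithinAt g g' (Icc a b) s) : f' = g' :=
  (uniqueDiffOn_Icc hab s hs).eq_deriv _ hf (hg.congr hfg (hfg hs))

theorem apply_deriv_sub_eq_of_apply_sub_eq {α : E →ₗ[ℝ] F →ₗ[ℝ] ℝ} {δ : F →ₗ[ℝ] G →ₗ[ℝ] ℝ}
    {C_α C_δ : ℝ} (hα : ∀ x v, |α x v| ≤ C_α * ‖x‖ * ‖v‖)
    (hδ : ∀ v y, |δ v y| ≤ C_δ * ‖v‖ * ‖y‖) {a b : ℝ} (hab : a < b) {x₁ x₁' x₂ x₂' : ℝ → E}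
    {y₁ y₁' y₂ y₂' : ℝ → G} {φ : ℝ → F →L[ℝ] ℝ}
    (hx₁ : ∀ s ∈ Icc a b, HasDerivWithinAt x₁ (x₁' s) (Icc a b) s)
    (hx₂ : ∀ s ∈ Icc a b, HasDerivWithinAt x₂ (x₂' s) (Icc a b) s)
    (hy₁ : ∀ s ∈ Icc a b, HasDerivWithinAt y₁ (y₁' s) (Icc a b) s)
    (hy₂ : ∀ s ∈ Icc a b, HasDerivWithinAt y₂ (y₂' s) (Icc a b) s)
    (h₁ : ∀ s ∈ Icc a b, ∀ v, α (x₁ s) v - δ v (y₁ s) = φ s v)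
    (h₂ : ∀ s ∈ Icc a b, ∀ v, α (x₂ s) v - δ v (y₂ s) = φ s v) :
    ∀ s ∈ Icc a b, ∀ v, α (x₁' s - x₂' s) v = δ v (y₁' s - y₂' s) := by
  intro s hs v
  have hα_v := α.hasDerivWithinAt_of_bound hα ((hx₁ s hs).sub (hx₂ s hs))
    (hasDerivWithinAt_const s _ v)
  have hδ_v := δ.hasDerivWithinAt_of_bound hδ (hasDerivWithinAt_const s _ v)
    ((hy₁ s hs).sub (hy₂ s hs))
  have heqOn : EqOn (fun σ ↦ α (x₁ σ - x₂ σ) v) (fun σ ↦ δ v (y₁ σ - y₂ σ)) (Icc a b) := by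
    intro σ hσ
    have := h₁ σ hσ v
    have := h₂ σ hσ v
    simp only [map_sub, LinearMap.sub_apply]
    linarith
  simpa using eq_of_hasDerivWithinAt_Icc_of_eqOn hab hs heqOn hα_v hδ_v

theorem le_iSup_Icc_of_continuousOn {f : ℝ → ℝ} {a b x : ℝ} (hf : ContinuousOn f (Icc a b))
    (hx : x ∈ Icc a b) : f x ≤ ⨆ s : Icc a b, f s := by
  refine le_ciSup (f := fun s : Icc a b ↦ f s) ?_ ⟨x, hx⟩
  rw [← image_eq_range]
  exact (isCompact_Icc.image_of_continuousOn hf).bddAbove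

theorem norm_sub_le_mul_iSup_norm_deriv {f f' : ℝ → E} {a b s τ : ℝ}
    (hf : ∀ x ∈ Icc a b, HasDerivWithinAt f (f' x) (Icc a b) x)
    (hf' : ContinuousOn f' (Icc a b)) (hτ : 0 ≤ τ) (hsτ : s - τ ∈ Icc a b)
    (hs : s ∈ Icc a b) : ‖f s - f (s - τ)‖ ≤ τ * ⨆ x : Icc a b, ‖f' x‖ := by
  have := (convex_Icc a b).norm_image_sub_le_of_norm_hasDerivWithin_le hf
    (fun x hx ↦ le_iSup_Icc_of_continuousOn hf'.norm hx) hsτ hs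
  rwa [sub_sub_cancel, Real.norm_of_nonneg hτ, mul_comm] at this

end Calculus

section Energy

variable {V H Q : Type*} [NormedAddCommGroup V] [NormedAddCommGroup H] [NormedSpace ℝ H]
  [NormedAddCommGroup Q] [NormedSpace ℝ Q]

/-- With `e = e₁ - e₂` and `y = ι (r₁' - r₂')`, testing the equations with `e` and `r₁' - r₂'`
gives `b (r₁ - r₂) (r₁' - r₂') = -a e e - c y y - d e (y - z)`; the coupling term is then
absorbed by Young's inequality. -/
theorem two_mul_sub_le_of_error_eqns [NormedSpace ℝ V] {a : V →ₗ[ℝ] V →ₗ[ℝ] ℝ}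
    {b : Q →ₗ[ℝ] Q →ₗ[ℝ] ℝ} {c : H →ₗ[ℝ] H →ₗ[ℝ] ℝ} {d : V →ₗ[ℝ] H →ₗ[ℝ] ℝ} {ι : Q →L[ℝ] H}
    {c_a C_d : ℝ} (hc_a : 0 < c_a) (ha_coer : ∀ v, c_a * ‖v‖ ^ 2 ≤ a v v)
    (hc_nonneg : ∀ y, 0 ≤ c y y) (hd_bdd : ∀ v y, |d v y| ≤ C_d * ‖v‖ * ‖y‖)
    {e₁ e₂ : V} {r₁ r₂ r₁' r₂' : Q} {z : H} {φ : Q →L[ℝ] ℝ} {η : ℝ}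
    (hconstr : ∀ v, a (e₁ - e₂) v = d v z)
    (h₁ : ∀ q, d e₁ (ι q) + c (ι r₁') (ι q) + b r₁ q = φ q)
    (h₂ : ∀ q, d e₂ (ι q) + c (ι r₂') (ι q) + b r₂ q = φ q)
    (hz : ‖ι (r₁' - r₂') - z‖ ≤ η) :
    2 * b (r₁ - r₂) (r₁' - r₂') ≤ C_d ^ 2 * η ^ 2 / c_a - c_a * ‖e₁ - e₂‖ ^ 2 := by
  set e := e₁ - e₂
  set y := ι (r₁' - r₂')
  have hβ : b (r₁ - r₂) (r₁' - r₂') = -a e e - c y y - d e (y - z) := by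
    have h₁₂ : d e y + c y y + b (r₁ - r₂) (r₁' - r₂') = 0 := by
      have h₁' := h₁ (r₁' - r₂')
      have h₂' := h₂ (r₁' - r₂')
      simp only [e, y, map_sub, LinearMap.sub_apply] at h₁' h₂' ⊢
      linarith
    rw [hconstr e, (d e).map_sub]
    linarith
  have hcoupling : -d e (y - z) ≤ |C_d| * ‖e‖ * η :=
    calc -d e (y - z) ≤ |d e (y - z)| := neg_le_abs _
      _ ≤ C_d * ‖e‖ * ‖y - z‖ := hd_bdd e (y - z)
      _ ≤ |C_d| * ‖e‖ * η := by gcongr; exact le_abs_self C_d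
  have hyoung : 2 * (|C_d| * ‖e‖ * η) ≤ C_d ^ 2 * η ^ 2 / c_a + c_a * ‖e‖ ^ 2 := by
    rw [← sq_abs C_d, div_add' _ _ _ hc_a.ne', le_div_iff₀ hc_a]
    nlinarith [sq_nonneg (c_a * ‖e‖ - |C_d| * η)]
  linarith [ha_coer e, hc_nonneg y]

theorem energy_le_of_two_mul_le {b : Q →ₗ[ℝ] Q →ₗ[ℝ] ℝ} {c_a c_b C_b K t : ℝ}
    (hb_symm : ∀ p q, b p q = b q p) (hb_coer : ∀ q, c_b * ‖q‖ ^ 2 ≤ b q q)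
    (hb_bdd : ∀ p q, |b p q| ≤ C_b * ‖p‖ * ‖q‖) (ht : 0 ≤ t) {r r' : ℝ → Q} {e : ℝ → V}
    (hr : ∀ s ∈ Icc 0 t, HasDerivWithinAt r (r' s) (Icc 0 t) s) (hr₀ : r 0 = 0)
    (he : ContinuousOn e (Icc 0 t))
    (hpt : ∀ s ∈ Icc 0 t, 2 * b (r s) (r' s) ≤ K - c_a * ‖e s‖ ^ 2) :
    c_a * (∫ s in (0)..t, ‖e s‖ ^ 2) + c_b * ‖r t‖ ^ 2 ≤ K * t := by
  have hderiv : ∀ s ∈ Icc 0 t,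
      HasDerivWithinAt (fun σ ↦ b (r σ) (r σ)) (2 * b (r s) (r' s)) (Icc 0 t) s := by
    intro s hs
    convert b.hasDerivWithinAt_of_bound hb_bdd (hr s hs) (hr s hs) using 1
    rw [hb_symm (r' s)]
    ring
  have hsq : ContinuousOn (fun s ↦ ‖e s‖ ^ 2) (Icc 0 t) := he.norm.pow 2
  have hmono := sub_le_integral_of_hasDeriv_right_of_le (φ := fun s ↦ K - c_a * ‖e s‖ ^ 2) ht
    (fun s hs ↦ (hderiv s hs).continuousWithinAt)
    (fun s hs ↦ (hderiv s (Ioo_subset_Icc_self hs)).mono_of_mem_nhdsWithin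
      (Icc_mem_nhdsGT_of_mem ⟨hs.1.le, hs.2⟩))
    (continuousOn_const.sub (continuousOn_const.mul hsq)).integrableOn_Icc
    (fun s hs ↦ hpt s (Ioo_subset_Icc_self hs))
  rw [integral_sub intervalIntegrable_const
    ((hsq.mono (uIcc_of_le ht).subset).intervalIntegrable.const_mul c_a),
    integral_const_mul, integral_const, hr₀, map_zero, sub_zero, smul_eq_mul] at hmono
  linarith [hb_coer (r t)]

end Energy

theorem add_le_of_mul_add_mul_le {c_a c_b I R X : ℝ} (hc_a : 0 < c_a) (hc_b : 0 < c_b)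
    (hI : 0 ≤ I) (hR : 0 ≤ R) (h : c_a * I + c_b * R ≤ X) : I + R ≤ (1 / c_a + 1 / c_b) * X := by
  have hI' : I ≤ X / c_a := by rw [le_div_iff₀ hc_a]; nlinarith
  have hR' : R ≤ X / c_b := by rw [le_div_iff₀ hc_b]; nlinarith
  rw [add_mul, one_div_mul_eq_div, one_div_mul_eq_div]
  linarith

theorem stmt2_general {V Q HQ : Type*}
    [NormedAddCommGroup V] [InnerProductSpace ℝ V]
    [NormedAddCommGroup Q] [InnerProductSpace ℝ Q]
    [NormedAddCommGroup HQ] [InnerProductSpace ℝ HQ]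
    -- continuous embeddings V ↪ H_V and Q ↪ H_Q
    (ιQ : Q →L[ℝ] HQ)
    -- the bilinear forms and their constants
    (a : V →ₗ[ℝ] V →ₗ[ℝ] ℝ) (b : Q →ₗ[ℝ] Q →ₗ[ℝ] ℝ)
    (c : HQ →ₗ[ℝ] HQ →ₗ[ℝ] ℝ) (d : V →ₗ[ℝ] HQ →ₗ[ℝ] ℝ)
    (c_a C_a c_b C_b c_c C_d : ℝ)
    (hc_a : 0 < c_a) (hc_b : 0 < c_b) (hc_c : 0 < c_c)
    (ha_coer : ∀ v : V, c_a * ‖v‖ ^ 2 ≤ a v v)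
    (ha_bdd : ∀ u v : V, |a u v| ≤ C_a * ‖u‖ * ‖v‖)
    (hb_symm : ∀ p q : Q, b p q = b q p)
    (hb_coer : ∀ q : Q, c_b * ‖q‖ ^ 2 ≤ b q q)
    (hb_bdd : ∀ p q : Q, |b p q| ≤ C_b * ‖p‖ * ‖q‖)
    (hc_coer : ∀ q : HQ, c_c * ‖q‖ ^ 2 ≤ c q q)
    (hd_bdd : ∀ (v : V) (q : HQ), |d v q| ≤ C_d * ‖v‖ * ‖q‖) :
    ∃ C : ℝ, 0 < C ∧
      ∀ (T τ : ℝ), 0 < T → 0 < τ →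
      ∀ (f f' : ℝ → V →L[ℝ] ℝ) (g : ℝ → Q →L[ℝ] ℝ)
        (u u' : ℝ → V) (p p' : ℝ → Q)
        (ubar ubar' : ℝ → V) (pbar pbar' pbar'' : ℝ → Q),
        -- data: f continuously differentiable, g continuous
        (∀ t ∈ Icc (0:ℝ) T, HasDerivWithinAt f (f' t) (Icc 0 T) t) →
        ContinuousOn f (Icc 0 T) → ContinuousOn f' (Icc 0 T) → ContinuousOn g (Icc 0 T) →
        -- (u,p) is a C¹ solution of the two-field system
        (∀ t ∈ Icc (0:ℝ) T, HasDerivWithinAt u (u' t) (Icc 0 T) t) →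
        ContinuousOn u' (Icc 0 T) →
        (∀ t ∈ Icc (0:ℝ) T, HasDerivWithinAt p (p' t) (Icc 0 T) t) →
        ContinuousOn p' (Icc 0 T) →
        (∀ t ∈ Icc (0:ℝ) T, ∀ v : V, a (u t) v - d v (ιQ (p t)) = f t v) →
        (∀ t ∈ Icc (0:ℝ) T, ∀ q : Q,
          d (u' t) (ιQ q) + c (ιQ (p' t)) (ιQ q) + b (p t) q = g t q) →
        -- (ū,p̄) is a solution of the delay system, ū ∈ C¹([0,T]), p̄ ∈ C²([−τ,T])
        (∀ t ∈ Icc (0:ℝ) T, HasDerivWithinAt ubar (ubar' t) (Icc 0 T) t) →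
        ContinuousOn ubar' (Icc 0 T) →
        (∀ t ∈ Icc (-τ) T, HasDerivWithinAt pbar (pbar' t) (Icc (-τ) T) t) →
        (∀ t ∈ Icc (-τ) T, HasDerivWithinAt pbar' (pbar'' t) (Icc (-τ) T) t) →
        ContinuousOn pbar' (Icc (-τ) T) → ContinuousOn pbar'' (Icc (-τ) T) →
        (∀ t ∈ Icc (0:ℝ) T, ∀ v : V, a (ubar t) v - d v (ιQ (pbar (t - τ))) = f t v) →
        (∀ t ∈ Icc (0:ℝ) T, ∀ q : Q,
          d (ubar' t) (ιQ q) + c (ιQ (pbar' t)) (ιQ q) + b (pbar t) q = g t q) →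
        -- matching initial values
        u 0 = ubar 0 → p 0 = pbar 0 →
        ∀ t ∈ Icc (0:ℝ) T,
          (∫ s in (0:ℝ)..t, ‖ubar' s - u' s‖ ^ 2) + ‖pbar t - p t‖ ^ 2 ≤
            C * τ ^ 2 * t * (⨆ s : Icc (-τ) t, ‖ιQ (pbar'' (s : ℝ))‖) ^ 2 := by
  refine ⟨C_d ^ 2 / c_a * (1 / c_a + 1 / c_b) + 1, by positivity, ?_⟩
  intro T τ hT hτ f f' g u u' p p' ubar ubar' pbar pbar' pbar'' _ _ _ _ hu hu'c hp _ heq heq'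
    hubar hubar'c hpbar hpbar' _ hpbar''c heq_delay heq'_delay _ hp₀ t ht
  set M := ⨆ s : Icc (-τ) t, ‖ιQ (pbar'' (s : ℝ))‖
  have hsub_T : Icc 0 t ⊆ Icc 0 T := Icc_subset_Icc_right ht.2
  have hsub_τ : Icc (-τ) t ⊆ Icc (-τ) T := Icc_subset_Icc_right ht.2
  have hsub_0 : Icc 0 t ⊆ Icc (-τ) t := Icc_subset_Icc_left (by linarith)
  have hshift (s) (hs : s ∈ Icc 0 T) :
      HasDerivWithinAt (fun σ ↦ pbar (σ - τ)) (pbar' (s - τ)) (Icc 0 T) s :=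
    (hpbar _ ⟨by linarith [hs.1], by linarith [hs.2]⟩).comp_sub_const_of_mapsTo
      fun σ hσ ↦ ⟨by linarith [hσ.1], by linarith [hσ.2]⟩
  have hconstr := apply_deriv_sub_eq_of_apply_sub_eq ha_bdd hd_bdd hT hubar hu
    (fun s hs ↦ ιQ.hasFDerivAt.comp_hasDerivWithinAt s (hshift s hs))
    (fun s hs ↦ ιQ.hasFDerivAt.comp_hasDerivWithinAt s (hp s hs)) heq_delay heq
  have hdelay (s) (hs : s ∈ Icc 0 t) : ‖ιQ (pbar' s) - ιQ (pbar' (s - τ))‖ ≤ τ * M :=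
    norm_sub_le_mul_iSup_norm_deriv
      (fun σ hσ ↦ ιQ.hasFDerivAt.comp_hasDerivWithinAt σ ((hpbar' σ (hsub_τ hσ)).mono hsub_τ))
      (ιQ.continuous.comp_continuousOn (hpbar''c.mono hsub_τ)) hτ.le
      ⟨by linarith [hs.1], by linarith [hs.2]⟩ (hsub_0 hs)
  have henergy := energy_le_of_two_mul_le (r := fun s ↦ pbar s - p s) hb_symm hb_coer hb_bdd ht.1
    (fun s hs ↦ ((hpbar s (hsub_τ (hsub_0 hs))).mono (hsub_0.trans hsub_τ)).sub
      ((hp s (hsub_T hs)).mono hsub_T))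
    (by simp [hp₀]) ((hubar'c.sub hu'c).mono hsub_T) fun s hs ↦
      two_mul_sub_le_of_error_eqns hc_a ha_coer
        (fun y ↦ (mul_nonneg hc_c.le (sq_nonneg _)).trans (hc_coer y)) hd_bdd
        (hconstr s (hsub_T hs)) (heq'_delay s (hsub_T hs)) (heq' s (hsub_T hs))
        (by rw [map_sub, sub_sub_sub_cancel_right]; exact hdelay s hs)
  calc (∫ s in (0:ℝ)..t, ‖ubar' s - u' s‖ ^ 2) + ‖pbar t - p t‖ ^ 2
      ≤ (1 / c_a + 1 / c_b) * (C_d ^ 2 * (τ * M) ^ 2 / c_a * t) :=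
        add_le_of_mul_add_mul_le hc_a hc_b (integral_nonneg ht.1 fun _ _ ↦ sq_nonneg _)
          (sq_nonneg _) henergy
    _ ≤ (C_d ^ 2 / c_a * (1 / c_a + 1 / c_b) + 1) * τ ^ 2 * t * M ^ 2 := by
        have : 0 ≤ τ ^ 2 * t * M ^ 2 := by have := ht.1; positivity
        linarith [show (1 / c_a + 1 / c_b) * (C_d ^ 2 * (τ * M) ^ 2 / c_a * t) =
          C_d ^ 2 / c_a * (1 / c_a + 1 / c_b) * (τ ^ 2 * t * M ^ 2) by ring]

/-- Energy estimate between the two-field solution and the delay two-field solution: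
there is a constant `C` depending only on the constants of the bilinear forms
(in particular independent of `τ`, `t` and `T`) such that
`∫₀ᵗ ‖ū′ − u′‖_V² + ‖p̄(t) − p(t)‖_Q² ≤ C τ² t sup_{[−τ,t]} ‖p̄″‖_{H_Q}²`. -/
theorem stmt2 {V HV Q HQ : Type*}
    [NormedAddCommGroup V] [InnerProductSpace ℝ V] [CompleteSpace V]
    [NormedAddCommGroup HV] [InnerProductSpace ℝ HV] [CompleteSpace HV]
    [NormedAddCommGroup Q] [InnerProductSpace ℝ Q] [CompleteSpace Q]
    [NormedAddCommGroup HQ] [InnerProductSpace ℝ HQ] [CompleteSpace HQ]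
    -- continuous embeddings V ↪ H_V and Q ↪ H_Q
    (ιV : V →L[ℝ] HV) (hιV : Function.Injective ιV)
    (ιQ : Q →L[ℝ] HQ) (hιQ : Function.Injective ιQ)
    (C_VH C_QH : ℝ)
    (hCVH : ∀ v : V, ‖ιV v‖ ≤ C_VH * ‖v‖)
    (hCQH : ∀ q : Q, ‖ιQ q‖ ≤ C_QH * ‖q‖)
    -- the bilinear forms and their constants
    (a : V →ₗ[ℝ] V →ₗ[ℝ] ℝ) (b : Q →ₗ[ℝ] Q →ₗ[ℝ] ℝ)
    (c : HQ →ₗ[ℝ] HQ →ₗ[ℝ] ℝ) (d : V →ₗ[ℝ] HQ →ₗ[ℝ] ℝ)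
    (c_a C_a c_b C_b c_c C_c C_d C_d' : ℝ)
    (hc_a : 0 < c_a) (hc_b : 0 < c_b) (hc_c : 0 < c_c)
    (ha_symm : ∀ u v : V, a u v = a v u)
    (ha_coer : ∀ v : V, c_a * ‖v‖ ^ 2 ≤ a v v)
    (ha_bdd : ∀ u v : V, |a u v| ≤ C_a * ‖u‖ * ‖v‖)
    (hb_symm : ∀ p q : Q, b p q = b q p)
    (hb_coer : ∀ q : Q, c_b * ‖q‖ ^ 2 ≤ b q q)
    (hb_bdd : ∀ p q : Q, |b p q| ≤ C_b * ‖p‖ * ‖q‖)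
    (hc_symm : ∀ p q : HQ, c p q = c q p)
    (hc_coer : ∀ q : HQ, c_c * ‖q‖ ^ 2 ≤ c q q)
    (hc_bdd : ∀ p q : HQ, |c p q| ≤ C_c * ‖p‖ * ‖q‖)
    (hd_bdd : ∀ (v : V) (q : HQ), |d v q| ≤ C_d * ‖v‖ * ‖q‖)
    (hd_bdd' : ∀ (v : V) (q : Q), |d v (ιQ q)| ≤ C_d' * ‖ιV v‖ * ‖q‖) :
    ∃ C : ℝ, 0 < C ∧
      ∀ (T τ : ℝ), 0 < T → 0 < τ →
      ∀ (f f' : ℝ → V →L[ℝ] ℝ) (g : ℝ → Q →L[ℝ] ℝ)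
        (u u' : ℝ → V) (p p' : ℝ → Q)
        (ubar ubar' : ℝ → V) (pbar pbar' pbar'' : ℝ → Q),
        -- data: f continuously differentiable, g continuous
        (∀ t ∈ Icc (0:ℝ) T, HasDerivWithinAt f (f' t) (Icc 0 T) t) →
        ContinuousOn f (Icc 0 T) → ContinuousOn f' (Icc 0 T) → ContinuousOn g (Icc 0 T) →
        -- (u,p) is a C¹ solution of the two-field system
        (∀ t ∈ Icc (0:ℝ) T, HasDerivWithinAt u (u' t) (Icc 0 T) t) →
        ContinuousOn u' (Icc 0 T) →
        (∀ t ∈ Icc (0:ℝ) T, HasDerivWithinAt p (p' t) (Icc 0 T) t) →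
        ContinuousOn p' (Icc 0 T) →
        (∀ t ∈ Icc (0:ℝ) T, ∀ v : V, a (u t) v - d v (ιQ (p t)) = f t v) →
        (∀ t ∈ Icc (0:ℝ) T, ∀ q : Q,
          d (u' t) (ιQ q) + c (ιQ (p' t)) (ιQ q) + b (p t) q = g t q) →
        -- (ū,p̄) is a solution of the delay system, ū ∈ C¹([0,T]), p̄ ∈ C²([−τ,T])
        (∀ t ∈ Icc (0:ℝ) T, HasDerivWithinAt ubar (ubar' t) (Icc 0 T) t) →
        ContinuousOn ubar' (Icc 0 T) →
        (∀ t ∈ Icc (-τ) T, HasDerivWithinAt pbar (pbar' t) (Icc (-τ) T) t) →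
        (∀ t ∈ Icc (-τ) T, HasDerivWithinAt pbar' (pbar'' t) (Icc (-τ) T) t) →
        ContinuousOn pbar' (Icc (-τ) T) → ContinuousOn pbar'' (Icc (-τ) T) →
        (∀ t ∈ Icc (0:ℝ) T, ∀ v : V, a (ubar t) v - d v (ιQ (pbar (t - τ))) = f t v) →
        (∀ t ∈ Icc (0:ℝ) T, ∀ q : Q,
          d (ubar' t) (ιQ q) + c (ιQ (pbar' t)) (ιQ q) + b (pbar t) q = g t q) →
        -- matching initial values
        u 0 = ubar 0 → p 0 = pbar 0 →
        ∀ t ∈ Icc (0:ℝ) T,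
          (∫ s in (0:ℝ)..t, ‖ubar' s - u' s‖ ^ 2) + ‖pbar t - p t‖ ^ 2 ≤
            C * τ ^ 2 * t * (⨆ s : Icc (-τ) t, ‖ιQ (pbar'' (s : ℝ))‖) ^ 2 :=
  stmt2_general ιQ a b c d c_a C_a c_b C_b c_c C_d hc_a hc_b hc_c ha_coer ha_bdd hb_symm hb_coer
    hb_bdd hc_coer hd_bdd
end

section
/- Suppose f : [0,T] → V* is continuously differentiable, (u,(y_i),(p_i)) solves the multiple-network system, and (ū,(ȳ_i),(p̄_i)) solves the delay network system with each p̄_i twice continuously differentiable on [−τ,T], where u(0) = ū(0), y_i(0) = ȳ_i(0) and p_i(0) = p̄_i(0) for all i. Then there are constants C₁ and C₂ depending only on c_a, c_c and the constants C_{d_i}, C_{d̂_i} (in particular independent of τ and t) such that for all t ∈ [0,T]: ‖ū(t) − u(t)‖_V² + Σ_{i=1}^m ‖p̄_i(t) − p_i(t)‖_Q² + Σ_{i=1}^m ∫₀ᵗ ‖ȳ_i(s) − y_i(s)‖_{H_Z}² ds ≤ C₁ · τ² · m · (1 + e^{C₂ (1 + 4 m² β²) t}) · P̄, where P̄ :=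 Σ_{i=1}^m ∫₀^T ‖p̄_i′(s)‖_Q² ds + (1 + τ²) · T · Σ_{i=1}^m sup_{s ∈ [−τ,T]} ‖p̄_i″(s)‖_Q². -/
open Set

/-!
The errors `e_u = ū - u`, `e_p = p̄ - p`, `e_y = ȳ - y` solve the multiple-network system with
zero data, except for the defect `Σᵢ dᵢ(·, p̄ᵢ(t - τ) - p̄ᵢ(t))` in the elliptic equation, whose
time derivative is `O(τ sup ‖p̄ᵢ''‖)`. Differentiating the elliptic and storage equations in time
and testing with `(e_u', e_p', e_y)` gives
`c_c/2 Σ‖e_p'‖² + ½ d/dt Σ‖e_y‖² ≤ C τ² Σ sup‖p̄ᵢ''‖² + (2m²β²/c_c) Σ‖e_p‖²`,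
the exchange terms being absorbed by Young's inequality. Since
`d/dt Σ‖e_p‖² ≤ Σ‖e_p‖² + Σ‖e_p'‖²`, Grönwall's inequality bounds `Σ‖e_p‖² + Σ‖e_y‖²/c_c`
by `C τ² t e^{λt}` with `λ = 1 + 4m²β²/c_c²`; coercivity of `a` then controls `e_u`.
-/

theorem HasDerivWithinAt.eq_of_eqOn_Icc {E : Type*} [NormedAddCommGroup E] [NormedSpace ℝ E]
    {F G : ℝ → E} {F' G' : E} {a b t : ℝ} (hab : a < b) (ht : t ∈ Icc a b)
    (hF : HasDerivWithinAt F F' (Icc a b) t) (hG : HasDerivWithinAt G G' (Icc a b) t)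
    (hFG : EqOn F G (Icc a b)) : F' = G' :=
  (uniqueDiffOn_Icc hab t ht).eq_deriv _ hF (hG.congr hFG (hFG ht))

theorem gronwallBound_zero_le {K ε x : ℝ} (hK : 0 ≤ K) (hε : 0 ≤ ε) :
    gronwallBound 0 K ε x ≤ ε * x * Real.exp (K * x) := by
  rcases hK.eq_or_lt with rfl | hK
  · simp [gronwallBound_K0]
  · have key : Real.exp (K * x) - 1 ≤ K * x * Real.exp (K * x) := by
      have h := mul_le_mul_of_nonneg_right (Real.add_one_le_exp (-(K * x)))
        (Real.exp_pos (K * x)).le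
      rw [← Real.exp_add, neg_add_cancel, Real.exp_zero] at h
      linarith
    simp only [gronwallBound_of_K_ne_0 hK.ne', zero_mul, zero_add]
    calc ε / K * (Real.exp (K * x) - 1) ≤ ε / K * (K * x * Real.exp (K * x)) := by gcongr
      _ = ε * x * Real.exp (K * x) := by field_simp

theorem le_mul_mul_exp_of_hasDerivWithinAt_le {f f' : ℝ → ℝ} {K ε T : ℝ} (hK : 0 ≤ K)
    (hε : 0 ≤ ε) (hf : ∀ t ∈ Icc 0 T, HasDerivWithinAt f (f' t) (Icc 0 T) t) (hf0 : f 0 ≤ 0)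
    (bound : ∀ t ∈ Icc 0 T, f' t ≤ K * f t + ε) :
    ∀ t ∈ Icc 0 T, f t ≤ ε * t * Real.exp (K * t) := by
  have hright : ∀ t ∈ Ico 0 T, HasDerivWithinAt f (f' t) (Ici t) t := fun t ht =>
    (hf t (Ico_subset_Icc_self ht)).mono_of_mem_nhdsWithin
      (Filter.mem_of_superset (Icc_mem_nhdsGE ht.2) (Icc_subset_Icc_left ht.1))
  intro t ht
  have := le_gronwallBound_of_liminf_deriv_right_le (fun s hs => (hf s hs).continuousWithinAt)
    (fun s hs _ hr => (hright s hs).liminf_right_slope_le hr) hf0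
    (fun s hs => bound s (Ico_subset_Icc_self hs)) t ht
  rw [sub_zero] at this
  exact this.trans (gronwallBound_zero_le hK hε)

theorem mul_exp_le_mul_exp_add_one {t T K : ℝ} (ht : t ∈ Icc 0 T) :
    t * Real.exp (K * t) ≤ T * Real.exp ((K + 1) * t) := by
  rw [add_one_mul, Real.exp_add]
  exact mul_le_mul ht.2 (le_mul_of_one_le_right (Real.exp_pos _).le (Real.one_le_exp ht.1))
    (Real.exp_pos _).le (ht.1.trans ht.2)

theorem sq_mul_exp_le_mul_exp_add_one {t T K : ℝ} (ht : t ∈ Icc 0 T) :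
    t ^ 2 * Real.exp (K * t) ≤ T * Real.exp ((K + 1) * t) := by
  rw [add_one_mul, Real.exp_add, sq, mul_assoc, mul_comm (Real.exp _)]
  exact mul_le_mul ht.2 (mul_le_mul_of_nonneg_right (by linarith [Real.add_one_le_exp t])
    (Real.exp_pos _).le) (mul_nonneg ht.1 (Real.exp_pos _).le) (ht.1.trans ht.2)

theorem ContinuousOn.norm_le_iSup_Icc {E : Type*} [NormedAddCommGroup E] {f : ℝ → E} {a b : ℝ}
    (hf : ContinuousOn f (Icc a b)) : ∀ x ∈ Icc a b, ‖f x‖ ≤ ⨆ s : Icc a b, ‖f s‖ :=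
  fun x hx => le_ciSup (by simpa [image_eq_range] using isCompact_Icc.bddAbove_image hf.norm)
    (⟨x, hx⟩ : Icc a b)

theorem hasDerivWithinAt_comp_sub_Icc {E : Type*} [NormedAddCommGroup E] [NormedSpace ℝ E]
    {f f' : ℝ → E} {τ T : ℝ} (hτ : 0 ≤ τ)
    (hf : ∀ x ∈ Icc (-τ) T, HasDerivWithinAt f (f' x) (Icc (-τ) T) x) :
    ∀ t ∈ Icc 0 T, HasDerivWithinAt (fun s => f (s - τ)) (f' (t - τ)) (Icc 0 T) t := by
  have hmaps : MapsTo (fun s => s - τ) (Icc 0 T) (Icc (-τ) T) := fun s hs =>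
    ⟨by linarith [hs.1], by linarith [hs.2]⟩
  intro t ht
  simpa [Function.comp_def] using
    (hf (t - τ) (hmaps ht)).scomp t ((hasDerivWithinAt_id t _).sub_const τ) hmaps

theorem norm_comp_sub_sub_le {E : Type*} [NormedAddCommGroup E] [NormedSpace ℝ E]
    {f f' : ℝ → E} {τ T M : ℝ} (hτ : 0 ≤ τ)
    (hf : ∀ x ∈ Icc (-τ) T, HasDerivWithinAt f (f' x) (Icc (-τ) T) x)
    (hM : ∀ x ∈ Icc (-τ) T, ‖f' x‖ ≤ M) : ∀ t ∈ Icc 0 T, ‖f (t - τ) - f t‖ ≤ τ * M := by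
  intro t ht
  have hsub : Icc (t - τ) t ⊆ Icc (-τ) T := Icc_subset_Icc (by linarith [ht.1]) ht.2
  have := norm_image_sub_le_of_norm_deriv_le_segment' (fun x hx => (hf x (hsub hx)).mono hsub)
    (fun x hx => hM x (hsub (Ico_subset_Icc_self hx))) t ⟨by linarith, le_rfl⟩
  rw [norm_sub_rev]
  linarith

theorem mul_le_mul_sq_add_sq_div {x y ε : ℝ} (hε : 0 < ε) :
    x * y ≤ ε * y ^ 2 + x ^ 2 / (4 * ε) := by
  have : ε * y ^ 2 + x ^ 2 / (4 * ε) - x * y = (2 * ε * y - x) ^ 2 / (4 * ε) := by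
    field_simp; ring
  nlinarith [div_nonneg (sq_nonneg (2 * ε * y - x)) (by positivity : (0:ℝ) ≤ 4 * ε)]

section BilinearForms

open Finset

variable {ι V Q Z H : Type*} [Fintype ι]
  [NormedAddCommGroup V] [NormedSpace ℝ V] [NormedAddCommGroup Q] [InnerProductSpace ℝ Q]
  [NormedAddCommGroup Z] [NormedSpace ℝ Z] [NormedAddCommGroup H] [InnerProductSpace ℝ H]

theorem sum_sq_card_mul_add_sum_le (a : ι → ℝ) :
    ∑ i, ((Fintype.card ι : ℝ) * a i + ∑ j, a j) ^ 2 ≤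
      4 * (Fintype.card ι : ℝ) ^ 2 * ∑ i, a i ^ 2 := by
  set n : ℝ := (Fintype.card ι : ℝ)
  have hn : 0 ≤ n := Nat.cast_nonneg _
  have hcs : (∑ j, a j) ^ 2 ≤ n * ∑ j, a j ^ 2 := by
    simpa [n] using sq_sum_le_card_mul_sum_sq (s := univ) (f := a)
  calc ∑ i, (n * a i + ∑ j, a j) ^ 2 ≤ ∑ i, 2 * (n ^ 2 * a i ^ 2 + (∑ j, a j) ^ 2) :=
        sum_le_sum fun i _ => by nlinarith [sq_nonneg (n * a i - ∑ j, a j)]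
    _ = 2 * (n ^ 2 * ∑ i, a i ^ 2 + n * (∑ j, a j) ^ 2) := by
        simp only [← mul_sum, sum_add_distrib, sum_const, card_univ, nsmul_eq_mul, n]
    _ ≤ 4 * n ^ 2 * ∑ i, a i ^ 2 := by nlinarith [mul_le_mul_of_nonneg_left hcs hn]

theorem sum_sum_erase_mul_inner_sub_le [DecidableEq ι] {β : ι → ι → ℝ} {b κ : ℝ}
    (hβ : ∀ i j, i ≠ j → |β i j| ≤ b) (hb : 0 ≤ b) (hκ : 0 < κ) (x q : ι → Q) :
    ∑ i, ∑ j ∈ univ.erase i, β i j * inner ℝ (x i - x j) (q i) ≤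
      κ / 2 * ∑ i, ‖q i‖ ^ 2 + 2 * (Fintype.card ι : ℝ) ^ 2 * b ^ 2 / κ * ∑ i, ‖x i‖ ^ 2 := by
  set n : ℝ := (Fintype.card ι : ℝ)
  set r : ι → ℝ := fun i => n * ‖x i‖ + ∑ j, ‖x j‖
  have hterm : ∀ i, ∀ j ∈ univ.erase i,
      β i j * inner ℝ (x i - x j) (q i) ≤ b * (‖x i‖ + ‖x j‖) * ‖q i‖ := fun i j hj =>
    calc β i j * inner ℝ (x i - x j) (q i)
        ≤ |β i j| * |inner ℝ (x i - x j) (q i)| := by rw [← abs_mul]; exact le_abs_self _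
      _ ≤ b * (‖x i - x j‖ * ‖q i‖) := by
        gcongr
        · exact hβ i j (ne_of_mem_erase hj).symm
        · exact abs_real_inner_le_norm _ _
      _ ≤ b * (‖x i‖ + ‖x j‖) * ‖q i‖ := by
        rw [← mul_assoc]; gcongr; exact norm_sub_le _ _
  have hrow : ∀ i, ∑ j ∈ univ.erase i, β i j * inner ℝ (x i - x j) (q i) ≤
      κ / 2 * ‖q i‖ ^ 2 + b ^ 2 * r i ^ 2 / (2 * κ) := fun i =>
    calc ∑ j ∈ univ.erase i, β i j * inner ℝ (x i - x j) (q i)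
        ≤ ∑ j ∈ univ.erase i, b * (‖x i‖ + ‖x j‖) * ‖q i‖ := sum_le_sum (hterm i)
      _ ≤ ∑ j, b * (‖x i‖ + ‖x j‖) * ‖q i‖ :=
        sum_le_sum_of_subset_of_nonneg (erase_subset _ _) fun _ _ _ => by positivity
      _ = b * r i * ‖q i‖ := by
        simp only [r, ← sum_mul, ← mul_sum, sum_add_distrib, sum_const, card_univ, nsmul_eq_mul]
        rfl
      _ ≤ κ / 2 * ‖q i‖ ^ 2 + b ^ 2 * r i ^ 2 / (2 * κ) := by
        convert mul_le_mul_sq_add_sq_div (half_pos hκ) using 3 <;> ring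
  calc ∑ i, ∑ j ∈ univ.erase i, β i j * inner ℝ (x i - x j) (q i)
      ≤ ∑ i, (κ / 2 * ‖q i‖ ^ 2 + b ^ 2 * r i ^ 2 / (2 * κ)) := sum_le_sum fun i _ => hrow i
    _ = κ / 2 * ∑ i, ‖q i‖ ^ 2 + b ^ 2 * (∑ i, r i ^ 2) / (2 * κ) := by
      rw [sum_add_distrib, mul_sum, mul_sum, sum_div]
    _ ≤ κ / 2 * ∑ i, ‖q i‖ ^ 2 + b ^ 2 * (4 * n ^ 2 * ∑ i, ‖x i‖ ^ 2) / (2 * κ) := by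
      gcongr; exact sum_sq_card_mul_add_sum_le fun i => ‖x i‖
    _ = κ / 2 * ∑ i, ‖q i‖ ^ 2 + 2 * n ^ 2 * b ^ 2 / κ * ∑ i, ‖x i‖ ^ 2 := by field_simp; ring

theorem sum_apply_le_mul_norm_sq_add (d : ι → V →L[ℝ] Q →L[ℝ] ℝ) {C : ι → ℝ}
    (hd : ∀ i v q, |d i v q| ≤ C i * ‖v‖ * ‖q‖) {ε : ℝ} (hε : 0 < ε) (x : V) (w : ι → Q) :
    ∑ i, d i x (w i) ≤ ε * ‖x‖ ^ 2 + (∑ i, C i ^ 2) * (∑ i, ‖w i‖ ^ 2) / (4 * ε) :=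
  calc ∑ i, d i x (w i) ≤ ∑ i, C i * ‖x‖ * ‖w i‖ :=
        sum_le_sum fun i _ => (le_abs_self _).trans (hd i x (w i))
    _ = (∑ i, C i * ‖w i‖) * ‖x‖ := by rw [sum_mul]; exact sum_congr rfl fun i _ => by ring
    _ ≤ ε * ‖x‖ ^ 2 + (∑ i, C i * ‖w i‖) ^ 2 / (4 * ε) := mul_le_mul_sq_add_sq_div hε
    _ ≤ ε * ‖x‖ ^ 2 + (∑ i, C i ^ 2) * (∑ i, ‖w i‖ ^ 2) / (4 * ε) := by
      gcongr; exact sum_mul_sq_le_sq_mul_sq _ _ _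

theorem apply_eq_sum_apply_deriv (a : V →L[ℝ] V →L[ℝ] ℝ) (d : ι → V →L[ℝ] Q →L[ℝ] ℝ)
    {T : ℝ} (hT : 0 < T) {u u' : ℝ → V} {p p' : ι → ℝ → Q}
    (hu : ∀ t ∈ Icc 0 T, HasDerivWithinAt u (u' t) (Icc 0 T) t)
    (hp : ∀ i, ∀ t ∈ Icc 0 T, HasDerivWithinAt (p i) (p' i t) (Icc 0 T) t)
    (h : ∀ t ∈ Icc 0 T, ∀ v, a (u t) v = ∑ i, d i v (p i t)) :
    ∀ t ∈ Icc 0 T, ∀ v, a (u' t) v = ∑ i, d i v (p' i t) := fun t ht v =>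
  HasDerivWithinAt.eq_of_eqOn_Icc hT ht
    ((a.flip v).hasFDerivAt.comp_hasDerivWithinAt t (hu t ht))
    (HasDerivWithinAt.fun_sum fun i _ => (d i v).hasFDerivAt.comp_hasDerivWithinAt t (hp i t ht))
    fun s hs => h s hs v

theorem inner_eq_apply_deriv (e : Z →L[ℝ] H) (dhat : Z →L[ℝ] Q →L[ℝ] ℝ)
    {T : ℝ} (hT : 0 < T) {y y' : ℝ → Z} {p p' : ℝ → Q}
    (hy : ∀ t ∈ Icc 0 T, HasDerivWithinAt y (y' t) (Icc 0 T) t)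
    (hp : ∀ t ∈ Icc 0 T, HasDerivWithinAt p (p' t) (Icc 0 T) t)
    (h : ∀ t ∈ Icc 0 T, ∀ z, inner ℝ (e (y t)) (e z) = dhat z (p t)) :
    ∀ t ∈ Icc 0 T, ∀ z, inner ℝ (e (y' t)) (e z) = dhat z (p' t) := fun t ht z =>
  HasDerivWithinAt.eq_of_eqOn_Icc hT ht
    (by
      simpa using (e.hasFDerivAt.comp_hasDerivWithinAt t (hy t ht)).inner ℝ
        (hasDerivWithinAt_const t _ (e z)))
    ((dhat z).hasFDerivAt.comp_hasDerivWithinAt t (hp t ht))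
    fun s hs => h s hs z

end BilinearForms

structure NetworkForms (ι V Q Z H : Type*) [NormedAddCommGroup V] [NormedSpace ℝ V]
    [NormedAddCommGroup Q] [InnerProductSpace ℝ Q] [NormedAddCommGroup Z] [NormedSpace ℝ Z]
    [NormedAddCommGroup H] [InnerProductSpace ℝ H] where
  emb : Z →L[ℝ] H
  a : V →L[ℝ] V →L[ℝ] ℝ
  c : Q →ₗ[ℝ] Q →ₗ[ℝ] ℝ
  d : ι → V →L[ℝ] Q →L[ℝ] ℝ
  dhat : ι → Z →L[ℝ] Q →L[ℝ] ℝ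
  c_a : ℝ
  c_c : ℝ
  C_d : ι → ℝ
  c_a_pos : 0 < c_a
  c_c_pos : 0 < c_c
  a_coercive : ∀ v, c_a * ‖v‖ ^ 2 ≤ a v v
  c_coercive : ∀ q, c_c * ‖q‖ ^ 2 ≤ c q q
  d_bound : ∀ i v q, |d i v q| ≤ C_d i * ‖v‖ * ‖q‖

namespace NetworkForms

open Finset

variable {ι V Q Z H : Type*} [Fintype ι]
  [NormedAddCommGroup V] [NormedSpace ℝ V] [NormedAddCommGroup Q] [InnerProductSpace ℝ Q]
  [NormedAddCommGroup Z] [NormedSpace ℝ Z] [NormedAddCommGroup H] [InnerProductSpace ℝ H]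
  (N : NetworkForms ι V Q Z H)

noncomputable def energyConst : ℝ := (∑ i, N.C_d i ^ 2) / (2 * N.c_a * N.c_c)

noncomputable def errorConst : ℝ :=
  (1 + N.c_c) * N.energyConst + 2 * (∑ i, N.C_d i ^ 2) * (N.energyConst + 1) / N.c_a ^ 2

theorem energyConst_nonneg : 0 ≤ N.energyConst :=
  div_nonneg (sum_nonneg fun _ _ => sq_nonneg _)
    (mul_pos (mul_pos two_pos N.c_a_pos) N.c_c_pos).le

theorem errorConst_nonneg : 0 ≤ N.errorConst := by
  have := N.energyConst_nonneg
  have := N.c_c_pos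
  have : 0 ≤ ∑ i, N.C_d i ^ 2 := sum_nonneg fun _ _ => sq_nonneg _
  unfold errorConst
  positivity

theorem norm_sq_le_of_apply_self_eq_sum {x : V} {w : ι → Q}
    (hx : N.a x x = ∑ i, N.d i x (w i)) :
    ‖x‖ ^ 2 ≤ (∑ i, N.C_d i ^ 2) * (∑ i, ‖w i‖ ^ 2) / N.c_a ^ 2 := by
  have hc_a := N.c_a_pos
  have h := sum_apply_le_mul_norm_sq_add N.d N.d_bound (half_pos hc_a) x w
  rw [le_div_iff₀ (by positivity)]
  have : (∑ i, N.C_d i ^ 2) * (∑ i, ‖w i‖ ^ 2) / (4 * (N.c_a / 2)) * (2 * N.c_a) =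
      (∑ i, N.C_d i ^ 2) * (∑ i, ‖w i‖ ^ 2) := by field_simp; ring
  nlinarith [N.a_coercive x]

theorem energy_rate_le [DecidableEq ι] {β : ι → ι → ℝ} {b : ℝ}
    (hβ : ∀ i j, i ≠ j → |β i j| ≤ b) (hb : 0 ≤ b) {x : V} {p q w : ι → Q} {g : ι → ℝ}
    (hx : N.a x x = ∑ i, N.d i x (q i + w i))
    (hq : ∀ i, N.d i x (q i) + N.c (q i) (q i) + g i =
      ∑ j ∈ univ.erase i, β i j * inner ℝ (p i - p j) (q i)) :
    N.c_c / 2 * ∑ i, ‖q i‖ ^ 2 + ∑ i, g i ≤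
      (∑ i, N.C_d i ^ 2) * (∑ i, ‖w i‖ ^ 2) / (4 * N.c_a) +
        2 * (Fintype.card ι : ℝ) ^ 2 * b ^ 2 / N.c_c * ∑ i, ‖p i‖ ^ 2 := by
  have hsum : ∑ i, (N.d i x (q i) + N.c (q i) (q i) + g i) =
      ∑ i, ∑ j ∈ univ.erase i, β i j * inner ℝ (p i - p j) (q i) :=
    Finset.sum_congr rfl fun i _ => hq i
  simp only [sum_add_distrib] at hsum
  simp only [map_add, sum_add_distrib] at hx
  have hsource := sum_apply_le_mul_norm_sq_add N.d N.d_bound N.c_a_pos x w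
  have hexchange := sum_sum_erase_mul_inner_sub_le hβ hb N.c_c_pos p q
  have hcoer : N.c_c * ∑ i, ‖q i‖ ^ 2 ≤ ∑ i, N.c (q i) (q i) := by
    rw [mul_sum]; exact sum_le_sum fun i _ => N.c_coercive (q i)
  linarith [N.a_coercive x]

/-- The system solved by the errors `ū - u`, `p̄ᵢ - pᵢ`, `ȳᵢ - yᵢ` between the delay system and
the multiple-network system; `δᵢ t = p̄ᵢ (t - τ) - p̄ᵢ t` is the delay defect. -/
structure IsDelayError [DecidableEq ι] (β : ι → ι → ℝ) (T : ℝ) (u u' : ℝ → V)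
    (p p' δ δ' : ι → ℝ → Q) (y y' : ι → ℝ → Z) : Prop where
  deriv_u : ∀ t ∈ Icc 0 T, HasDerivWithinAt u (u' t) (Icc 0 T) t
  deriv_p : ∀ i, ∀ t ∈ Icc 0 T, HasDerivWithinAt (p i) (p' i t) (Icc 0 T) t
  deriv_y : ∀ i, ∀ t ∈ Icc 0 T, HasDerivWithinAt (y i) (y' i t) (Icc 0 T) t
  deriv_δ : ∀ i, ∀ t ∈ Icc 0 T, HasDerivWithinAt (δ i) (δ' i t) (Icc 0 T) t
  elliptic : ∀ t ∈ Icc 0 T, ∀ v, N.a (u t) v = ∑ i, N.d i v (p i t + δ i t)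
  storage : ∀ t ∈ Icc 0 T, ∀ i z, inner ℝ (N.emb (y i t)) (N.emb z) = N.dhat i z (p i t)
  flow : ∀ t ∈ Icc 0 T, ∀ i q, N.d i (u' t) q + N.c (p' i t) q + N.dhat i (y i t) q =
    ∑ j ∈ univ.erase i, β i j * inner ℝ (p i t - p j t) q
  u_zero : u 0 = 0
  p_zero : ∀ i, p i 0 = 0
  y_zero : ∀ i, y i 0 = 0

namespace IsDelayError

variable {N} [DecidableEq ι] {β : ι → ι → ℝ} {T : ℝ} {u u' : ℝ → V} {p p' δ δ' : ι → ℝ → Q}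
  {y y' : ι → ℝ → Z}

theorem energy_deriv_le (hE : N.IsDelayError β T u u' p p' δ δ' y y') (hT : 0 < T) {b : ℝ}
    (hβ : ∀ i j, i ≠ j → |β i j| ≤ b) (hb : 0 ≤ b) {σ : ι → ℝ}
    (hδσ : ∀ i, ∀ t ∈ Icc 0 T, ‖δ' i t‖ ≤ σ i) :
    ∀ t ∈ Icc 0 T, ∑ i, 2 * inner ℝ (p i t) (p' i t) +
        (∑ i, 2 * inner ℝ (N.emb (y i t)) (N.emb (y' i t))) / N.c_c ≤
      (1 + 4 * (Fintype.card ι : ℝ) ^ 2 * b ^ 2 / N.c_c ^ 2) *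
          (∑ i, ‖p i t‖ ^ 2 + (∑ i, ‖N.emb (y i t)‖ ^ 2) / N.c_c) +
        N.energyConst * ∑ i, σ i ^ 2 := by
  have hc_a := N.c_a_pos
  have hc_c := N.c_c_pos
  have h1' := apply_eq_sum_apply_deriv N.a N.d hT hE.deriv_u
    (fun i t ht => (hE.deriv_p i t ht).add (hE.deriv_δ i t ht)) hE.elliptic
  have h2' : ∀ t ∈ Icc 0 T, ∀ i z, inner ℝ (N.emb (y' i t)) (N.emb z) = N.dhat i z (p' i t) :=
    fun t ht i => inner_eq_apply_deriv N.emb (N.dhat i) hT (hE.deriv_y i) (hE.deriv_p i)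
      (fun s hs => hE.storage s hs i) t ht
  intro t ht
  set n : ℝ := (Fintype.card ι : ℝ)
  set P := ∑ i, ‖p i t‖ ^ 2
  set S := ∑ i, ‖p' i t‖ ^ 2
  set G := ∑ i, inner ℝ (N.emb (y' i t)) (N.emb (y i t))
  set A := (∑ i, N.C_d i ^ 2) * ∑ i, σ i ^ 2
  have hδ' : ∑ i, ‖δ' i t‖ ^ 2 ≤ ∑ i, σ i ^ 2 :=
    sum_le_sum fun i _ => pow_le_pow_left₀ (norm_nonneg _) (hδσ i t ht) 2
  have hrate : N.c_c / 2 * S + G ≤ A / (4 * N.c_a) + 2 * n ^ 2 * b ^ 2 / N.c_c * P :=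
    (N.energy_rate_le hβ hb (g := fun i => inner ℝ (N.emb (y' i t)) (N.emb (y i t)))
      (h1' t ht (u' t)) fun i => by rw [h2' t ht i]; exact hE.flow t ht i (p' i t)).trans
      (by gcongr; exact mul_le_mul_of_nonneg_left hδ' (by positivity))
  have hpp : ∑ i, 2 * inner ℝ (p i t) (p' i t) ≤ P + S := by
    rw [← sum_add_distrib]
    exact sum_le_sum fun i _ => by
      linarith [real_inner_le_norm (p i t) (p' i t), two_mul_le_add_sq ‖p i t‖ ‖p' i t‖]
  have hG : ∑ i, 2 * inner ℝ (N.emb (y i t)) (N.emb (y' i t)) = 2 * G := by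
    rw [mul_sum]; exact sum_congr rfl fun i _ => by rw [real_inner_comm]
  have hY : 0 ≤ (∑ i, ‖N.emb (y i t)‖ ^ 2) / N.c_c := by positivity
  rw [hG]
  calc ∑ i, 2 * inner ℝ (p i t) (p' i t) + 2 * G / N.c_c
      ≤ P + 2 / N.c_c * (N.c_c / 2 * S + G) := by
        have : 2 * G / N.c_c = 2 / N.c_c * (N.c_c / 2 * S + G) - S := by field_simp; ring
        linarith
    _ ≤ P + 2 / N.c_c * (A / (4 * N.c_a) + 2 * n ^ 2 * b ^ 2 / N.c_c * P) := by gcongr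
    _ = (1 + 4 * n ^ 2 * b ^ 2 / N.c_c ^ 2) * P + N.energyConst * ∑ i, σ i ^ 2 := by
        simp only [A, energyConst]; field_simp; ring
    _ ≤ _ := by gcongr; linarith

theorem energy_le (hE : N.IsDelayError β T u u' p p' δ δ' y y') (hT : 0 < T) {b : ℝ}
    (hβ : ∀ i j, i ≠ j → |β i j| ≤ b) (hb : 0 ≤ b) {σ : ι → ℝ}
    (hδσ : ∀ i, ∀ t ∈ Icc 0 T, ‖δ' i t‖ ≤ σ i) :
    ∀ t ∈ Icc 0 T, ∑ i, ‖p i t‖ ^ 2 + (∑ i, ‖N.emb (y i t)‖ ^ 2) / N.c_c ≤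
      N.energyConst * (∑ i, σ i ^ 2) * t *
        Real.exp ((1 + 4 * (Fintype.card ι : ℝ) ^ 2 * b ^ 2 / N.c_c ^ 2) * t) :=
  le_mul_mul_exp_of_hasDerivWithinAt_le (by have := N.c_c_pos; positivity)
    (mul_nonneg N.energyConst_nonneg (by positivity))
    (fun t ht => (HasDerivWithinAt.fun_sum fun i _ => (hE.deriv_p i t ht).norm_sq).add
      ((HasDerivWithinAt.fun_sum fun i _ =>
        (N.emb.hasFDerivAt.comp_hasDerivWithinAt t (hE.deriv_y i t ht)).norm_sq).div_const _))
    (by simp [hE.p_zero, hE.y_zero]) (hE.energy_deriv_le hT hβ hb hδσ)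

theorem integral_le (hE : N.IsDelayError β T u u' p p' δ δ' y y') (hT : 0 < T) {b : ℝ}
    (hβ : ∀ i j, i ≠ j → |β i j| ≤ b) (hb : 0 ≤ b) {σ : ι → ℝ}
    (hδσ : ∀ i, ∀ t ∈ Icc 0 T, ‖δ' i t‖ ≤ σ i) :
    ∀ t ∈ Icc 0 T, ∑ i, ∫ s in (0:ℝ)..t, ‖N.emb (y i s)‖ ^ 2 ≤
      N.c_c * (N.energyConst * ∑ i, σ i ^ 2) * t ^ 2 *
        Real.exp ((1 + 4 * (Fintype.card ι : ℝ) ^ 2 * b ^ 2 / N.c_c ^ 2) * t) := by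
  intro t ht
  have hc_c := N.c_c_pos
  set lam := 1 + 4 * (Fintype.card ι : ℝ) ^ 2 * b ^ 2 / N.c_c ^ 2
  set K := N.energyConst * ∑ i, σ i ^ 2
  have hK : 0 ≤ K := mul_nonneg N.energyConst_nonneg (by positivity)
  have hcont : ∀ i, ContinuousOn (fun s => ‖N.emb (y i s)‖ ^ 2) (uIcc 0 t) := fun i =>
    ((N.emb.continuous.comp_continuousOn fun s hs => (hE.deriv_y i s hs).continuousWithinAt
      ).norm.pow 2).mono (by rw [uIcc_of_le ht.1]; exact Icc_subset_Icc_right ht.2)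
  have hbound : ∀ s ∈ Icc 0 t, ∑ i, ‖N.emb (y i s)‖ ^ 2 ≤ N.c_c * (K * t * Real.exp (lam * t)) :=
    fun s hs => by
      have hW := hE.energy_le hT hβ hb hδσ s ⟨hs.1, hs.2.trans ht.2⟩
      have : 0 ≤ ∑ i, ‖p i s‖ ^ 2 := by positivity
      have : K * s * Real.exp (lam * s) ≤ K * t * Real.exp (lam * t) := by
        have : 0 ≤ lam := by positivity
        gcongr <;> first | exact hs.2 | exact mul_nonneg hK ht.1
      rw [← div_le_iff₀' hc_c]
      linarith
  rw [← intervalIntegral.integral_finsetSum fun i _ => (hcont i).intervalIntegrable]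
  calc ∫ s in (0:ℝ)..t, ∑ i, ‖N.emb (y i s)‖ ^ 2
      ≤ ∫ s in (0:ℝ)..t, N.c_c * (K * t * Real.exp (lam * t)) :=
        intervalIntegral.integral_mono_on ht.1
          (ContinuousOn.intervalIntegrable (continuousOn_finsetSum _ fun i _ => hcont i))
          intervalIntegrable_const hbound
    _ = N.c_c * K * t ^ 2 * Real.exp (lam * t) := by simp; ring

theorem norm_sq_le (hE : N.IsDelayError β T u u' p p' δ δ' y y') {σ : ι → ℝ}
    (hδσ : ∀ i, ∀ t ∈ Icc 0 T, ‖δ' i t‖ ≤ σ i) :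
    ∀ t ∈ Icc 0 T, ‖u t‖ ^ 2 ≤
      2 * (∑ i, N.C_d i ^ 2) * (∑ i, ‖p i t‖ ^ 2 + (∑ i, σ i ^ 2) * t ^ 2) / N.c_a ^ 2 := by
  intro t ht
  have h0 : ∀ v, ∑ i, N.d i v (δ i 0) = 0 := fun v => by
    simpa [hE.u_zero, hE.p_zero] using
      (hE.elliptic 0 ⟨le_rfl, ht.1.trans ht.2⟩ v).symm
  have hx : N.a (u t) (u t) = ∑ i, N.d i (u t) (p i t + (δ i t - δ i 0)) := by
    simp only [map_add, map_sub, sum_add_distrib, sum_sub_distrib, h0, hE.elliptic t ht]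
    ring
  have hδ : ∀ i, ‖δ i t - δ i 0‖ ≤ σ i * t := fun i => by
    simpa using norm_image_sub_le_of_norm_deriv_le_segment' (hE.deriv_δ i)
      (fun x hx => hδσ i x (Ico_subset_Icc_self hx)) t ht
  have hsq : ∑ i, ‖p i t + (δ i t - δ i 0)‖ ^ 2 ≤
      2 * (∑ i, ‖p i t‖ ^ 2 + (∑ i, σ i ^ 2) * t ^ 2) := by
    rw [sum_mul, mul_add, mul_sum, mul_sum, ← sum_add_distrib]
    refine sum_le_sum fun i _ => ?_
    have hpδ := pow_le_pow_left₀ (norm_nonneg _) (norm_add_le (p i t) (δ i t - δ i 0)) 2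
    have hδ2 : ‖δ i t - δ i 0‖ ^ 2 ≤ σ i ^ 2 * t ^ 2 := by
      rw [← mul_pow]; exact pow_le_pow_left₀ (norm_nonneg _) (hδ i) 2
    nlinarith [sq_nonneg (‖p i t‖ - ‖δ i t - δ i 0‖)]
  calc ‖u t‖ ^ 2 ≤ (∑ i, N.C_d i ^ 2) * (∑ i, ‖p i t + (δ i t - δ i 0)‖ ^ 2) / N.c_a ^ 2 :=
        N.norm_sq_le_of_apply_self_eq_sum hx
    _ ≤ (∑ i, N.C_d i ^ 2) * (2 * (∑ i, ‖p i t‖ ^ 2 + (∑ i, σ i ^ 2) * t ^ 2)) /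
          N.c_a ^ 2 := by gcongr
    _ = _ := by ring

theorem sum_le (hE : N.IsDelayError β T u u' p p' δ δ' y y') (hT : 0 < T) {b : ℝ}
    (hβ : ∀ i j, i ≠ j → |β i j| ≤ b) (hb : 0 ≤ b) {σ : ι → ℝ}
    (hδσ : ∀ i, ∀ t ∈ Icc 0 T, ‖δ' i t‖ ≤ σ i) :
    ∀ t ∈ Icc 0 T, ‖u t‖ ^ 2 + ∑ i, ‖p i t‖ ^ 2 + ∑ i, ∫ s in (0:ℝ)..t, ‖N.emb (y i s)‖ ^ 2 ≤
      N.errorConst * (∑ i, σ i ^ 2) * T *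
        Real.exp ((2 + 4 * (Fintype.card ι : ℝ) ^ 2 * b ^ 2 / N.c_c ^ 2) * t) := by
  intro t ht
  have hc_c := N.c_c_pos
  have hW := hE.energy_le hT hβ hb hδσ t ht
  have hY := hE.integral_le hT hβ hb hδσ t ht
  set lam := 1 + 4 * (Fintype.card ι : ℝ) ^ 2 * b ^ 2 / N.c_c ^ 2
  set X := Real.exp (lam * t)
  set c₃ := N.energyConst
  set s2 := ∑ i, σ i ^ 2
  have hs2 : 0 ≤ s2 := by positivity
  have hP : ∑ i, ‖p i t‖ ^ 2 ≤ c₃ * s2 * (t * X) := by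
    have : 0 ≤ (∑ i, ‖N.emb (y i t)‖ ^ 2) / N.c_c := by positivity
    linarith
  have hu : ‖u t‖ ^ 2 ≤ 2 * (∑ i, N.C_d i ^ 2) * (c₃ * s2 * (t * X) + s2 * (t ^ 2 * X)) /
      N.c_a ^ 2 := (hE.norm_sq_le hδσ t ht).trans <| by
    have hX : 1 ≤ X := Real.one_le_exp (mul_nonneg (by positivity) ht.1)
    gcongr 2 * _ * ?_ / _
    exact add_le_add hP (mul_le_mul_of_nonneg_left (le_mul_of_one_le_right (sq_nonneg t) hX) hs2)
  rw [show 2 + 4 * (Fintype.card ι : ℝ) ^ 2 * b ^ 2 / N.c_c ^ 2 = lam + 1 by ring]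
  have := N.energyConst_nonneg
  have k1 : t * X ≤ T * Real.exp ((lam + 1) * t) := mul_exp_le_mul_exp_add_one ht
  have k2 : t ^ 2 * X ≤ T * Real.exp ((lam + 1) * t) := sq_mul_exp_le_mul_exp_add_one ht
  set Z := T * Real.exp ((lam + 1) * t)
  calc ‖u t‖ ^ 2 + ∑ i, ‖p i t‖ ^ 2 + ∑ i, ∫ s in (0:ℝ)..t, ‖N.emb (y i s)‖ ^ 2
      ≤ 2 * (∑ i, N.C_d i ^ 2) * (c₃ * s2 * (t * X) + s2 * (t ^ 2 * X)) / N.c_a ^ 2 +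
          c₃ * s2 * (t * X) + N.c_c * c₃ * s2 * (t ^ 2 * X) := by linarith
    _ ≤ 2 * (∑ i, N.C_d i ^ 2) * (c₃ * s2 * Z + s2 * Z) / N.c_a ^ 2 + c₃ * s2 * Z +
          N.c_c * c₃ * s2 * Z := by gcongr
    _ = N.errorConst * s2 * T * Real.exp ((lam + 1) * t) := by
        simp only [Z]; unfold errorConst; ring

theorem sum_le_delay (hE : N.IsDelayError β T u u' p p' δ δ' y y') (hT : 0 < T) {b : ℝ}
    (hβ : ∀ i j, i ≠ j → |β i j| ≤ b) (hb : 0 ≤ b) (hι : 1 ≤ Fintype.card ι) {τ : ℝ}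
    {S : ι → ℝ} (hδS : ∀ i, ∀ t ∈ Icc 0 T, ‖δ' i t‖ ≤ τ * S i) {P : ℝ}
    (hP : T * ∑ i, S i ^ 2 ≤ P) :
    ∀ t ∈ Icc 0 T, ‖u t‖ ^ 2 + ∑ i, ‖p i t‖ ^ 2 + ∑ i, ∫ s in (0:ℝ)..t, ‖N.emb (y i s)‖ ^ 2 ≤
      (N.errorConst + 1) * τ ^ 2 * Fintype.card ι *
        (1 + Real.exp ((2 + 1 / N.c_c ^ 2) * (1 + 4 * (Fintype.card ι : ℝ) ^ 2 * b ^ 2) * t)) *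
        P := by
  intro t ht
  set n : ℝ := (Fintype.card ι : ℝ)
  set X := Real.exp ((2 + 1 / N.c_c ^ 2) * (1 + 4 * n ^ 2 * b ^ 2) * t)
  have hc_c := N.c_c_pos
  have hK := N.errorConst_nonneg
  have hP0 : 0 ≤ P := (mul_nonneg hT.le (by positivity)).trans hP
  have hexp : Real.exp ((2 + 4 * n ^ 2 * b ^ 2 / N.c_c ^ 2) * t) ≤ X := by
    refine Real.exp_le_exp.mpr (mul_le_mul_of_nonneg_right ?_ ht.1)
    have : (2 + 1 / N.c_c ^ 2) * (1 + 4 * n ^ 2 * b ^ 2) =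
        2 + 4 * n ^ 2 * b ^ 2 / N.c_c ^ 2 + (8 * n ^ 2 * b ^ 2 + 1 / N.c_c ^ 2) := by
      field_simp; ring
    have : 0 ≤ 8 * n ^ 2 * b ^ 2 + 1 / N.c_c ^ 2 := by positivity
    linarith
  have hn : (1 : ℝ) ≤ n := Nat.one_le_cast.mpr hι
  calc _ ≤ _ := hE.sum_le hT hβ hb hδS t ht
    _ = N.errorConst * τ ^ 2 * (T * ∑ i, S i ^ 2) *
          Real.exp ((2 + 4 * n ^ 2 * b ^ 2 / N.c_c ^ 2) * t) := by
        simp only [mul_pow, ← mul_sum]; ring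
    _ ≤ N.errorConst * τ ^ 2 * P * X := by gcongr
    _ ≤ ((N.errorConst + 1) * n) * τ ^ 2 * P * (1 + X) := by
        have : N.errorConst ≤ (N.errorConst + 1) * n := by nlinarith
        gcongr
        linarith
    _ = _ := by ring

end IsDelayError

theorem isDelayError_sub [DecidableEq ι] {β : ι → ι → ℝ} {T τ : ℝ} (hτ : 0 ≤ τ)
    {f : ℝ → V →L[ℝ] ℝ} {g : ι → ℝ → Q →L[ℝ] ℝ} {u u' ubar ubar' : ℝ → V}
    {y y' ybar ybar' : ι → ℝ → Z} {p p' pbar pbar' : ι → ℝ → Q}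
    (hu : ∀ t ∈ Icc 0 T, HasDerivWithinAt u (u' t) (Icc 0 T) t)
    (hy : ∀ i, ∀ t ∈ Icc 0 T, HasDerivWithinAt (y i) (y' i t) (Icc 0 T) t)
    (hp : ∀ i, ∀ t ∈ Icc 0 T, HasDerivWithinAt (p i) (p' i t) (Icc 0 T) t)
    (hu_eq : ∀ t ∈ Icc 0 T, ∀ v, N.a (u t) v - ∑ i, N.d i v (p i t) = f t v)
    (hy_eq : ∀ t ∈ Icc 0 T, ∀ i z,
      inner ℝ (N.emb (y i t)) (N.emb z) - N.dhat i z (p i t) = 0)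
    (hp_eq : ∀ t ∈ Icc 0 T, ∀ i q, N.d i (u' t) q + N.c (p' i t) q + N.dhat i (y i t) q -
      ∑ j ∈ univ.erase i, β i j * inner ℝ (p i t - p j t) q = g i t q)
    (hubar : ∀ t ∈ Icc 0 T, HasDerivWithinAt ubar (ubar' t) (Icc 0 T) t)
    (hybar : ∀ i, ∀ t ∈ Icc 0 T, HasDerivWithinAt (ybar i) (ybar' i t) (Icc 0 T) t)
    (hpbar : ∀ i, ∀ t ∈ Icc (-τ) T, HasDerivWithinAt (pbar i) (pbar' i t) (Icc (-τ) T) t)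
    (hubar_eq : ∀ t ∈ Icc 0 T, ∀ v, N.a (ubar t) v - ∑ i, N.d i v (pbar i (t - τ)) = f t v)
    (hybar_eq : ∀ t ∈ Icc 0 T, ∀ i z,
      inner ℝ (N.emb (ybar i t)) (N.emb z) - N.dhat i z (pbar i t) = 0)
    (hpbar_eq : ∀ t ∈ Icc 0 T, ∀ i q,
      N.d i (ubar' t) q + N.c (pbar' i t) q + N.dhat i (ybar i t) q -
        ∑ j ∈ univ.erase i, β i j * inner ℝ (pbar i t - pbar j t) q = g i t q)
    (hu0 : ubar 0 = u 0) (hy0 : ∀ i, ybar i 0 = y i 0) (hp0 : ∀ i, pbar i 0 = p i 0) :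
    N.IsDelayError β T (fun t => ubar t - u t) (fun t => ubar' t - u' t)
      (fun i t => pbar i t - p i t) (fun i t => pbar' i t - p' i t)
      (fun i t => pbar i (t - τ) - pbar i t) (fun i t => pbar' i (t - τ) - pbar' i t)
      (fun i t => ybar i t - y i t) (fun i t => ybar' i t - y' i t) := by
  have hsub : Icc 0 T ⊆ Icc (-τ) T := Icc_subset_Icc (by linarith) le_rfl
  have hpbar0 : ∀ i, ∀ t ∈ Icc 0 T, HasDerivWithinAt (pbar i) (pbar' i t) (Icc 0 T) t :=
    fun i t ht => (hpbar i t (hsub ht)).mono hsub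
  refine
    { deriv_u := fun t ht => (hubar t ht).sub (hu t ht)
      deriv_p := fun i t ht => (hpbar0 i t ht).sub (hp i t ht)
      deriv_y := fun i t ht => (hybar i t ht).sub (hy i t ht)
      deriv_δ := fun i t ht =>
        (hasDerivWithinAt_comp_sub_Icc hτ (hpbar i) t ht).sub (hpbar0 i t ht)
      elliptic := fun t ht v => ?_
      storage := fun t ht i z => ?_
      flow := fun t ht i q => ?_
      u_zero := sub_eq_zero.mpr hu0
      p_zero := fun i => sub_eq_zero.mpr (hp0 i)
      y_zero := fun i => sub_eq_zero.mpr (hy0 i) }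
  · have h := hubar_eq t ht v
    have h' := hu_eq t ht v
    simp only [map_sub, sub_apply, map_add, sum_add_distrib, sum_sub_distrib]
    linarith
  · have h := hybar_eq t ht i z
    have h' := hy_eq t ht i z
    simp only [map_sub, inner_sub_left]
    linarith
  · have h := hpbar_eq t ht i q
    have h' := hp_eq t ht i q
    have hexch : ∀ j, β i j * inner ℝ (pbar i t - p i t - (pbar j t - p j t)) q =
        β i j * inner ℝ (pbar i t - pbar j t) q - β i j * inner ℝ (p i t - p j t) q := fun j => by
      rw [← mul_sub, ← inner_sub_left, sub_sub_sub_comm]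
    simp only [map_sub, sub_apply, LinearMap.sub_apply, hexch,
      sum_sub_distrib]
    linarith

end NetworkForms

theorem stmt5_general {V Z HZ Q : Type*}
    [NormedAddCommGroup V] [InnerProductSpace ℝ V] [CompleteSpace V]
    [NormedAddCommGroup Z] [InnerProductSpace ℝ Z] [CompleteSpace Z]
    [NormedAddCommGroup HZ] [InnerProductSpace ℝ HZ] [CompleteSpace HZ]
    [NormedAddCommGroup Q] [InnerProductSpace ℝ Q] [CompleteSpace Q]
    -- continuous embedding Z ↪ H_Z
    (ιZ : Z →L[ℝ] HZ)
    -- number of networks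
    (m : ℕ) (hm : 1 ≤ m)
    -- the bilinear forms and their constants
    (a : V →ₗ[ℝ] V →ₗ[ℝ] ℝ) (c : Q →ₗ[ℝ] Q →ₗ[ℝ] ℝ)
    (d : Fin m → V →ₗ[ℝ] Q →ₗ[ℝ] ℝ) (dhat : Fin m → Z →ₗ[ℝ] Q →ₗ[ℝ] ℝ)
    (c_a C_a c_c : ℝ) (C_d C_dhat : Fin m → ℝ)
    (hc_a : 0 < c_a) (hc_c : 0 < c_c)
    (ha_coer : ∀ v : V, c_a * ‖v‖ ^ 2 ≤ a v v)
    (ha_bdd : ∀ u v : V, |a u v| ≤ C_a * ‖u‖ * ‖v‖)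
    (hc_coer : ∀ q : Q, c_c * ‖q‖ ^ 2 ≤ c q q)
    (hd_bdd : ∀ (i : Fin m) (v : V) (q : Q), |d i v q| ≤ C_d i * ‖v‖ * ‖q‖)
    (hdhat_bdd : ∀ (i : Fin m) (z : Z) (q : Q), |dhat i z q| ≤ C_dhat i * ‖z‖ * ‖q‖) :
    ∃ C₁ C₂ : ℝ, 0 < C₁ ∧ 0 < C₂ ∧
      ∀ (T τ β : ℝ), 0 < T → 0 < τ → 0 ≤ β →
      ∀ (βm : Fin m → Fin m → ℝ), (∀ i j : Fin m, i ≠ j → |βm i j| ≤ β) →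
      ∀ (f f' : ℝ → V →L[ℝ] ℝ) (g : Fin m → ℝ → Q →L[ℝ] ℝ)
        (u u' : ℝ → V) (y y' : Fin m → ℝ → Z) (p p' : Fin m → ℝ → Q)
        (ubar ubar' : ℝ → V) (ybar ybar' : Fin m → ℝ → Z)
        (pbar pbar' pbar'' : Fin m → ℝ → Q),
        -- data: f continuously differentiable, the gᵢ continuous
        (∀ t ∈ Icc (0:ℝ) T, HasDerivWithinAt f (f' t) (Icc 0 T) t) →
        ContinuousOn f (Icc 0 T) → ContinuousOn f' (Icc 0 T) →
        (∀ i, ContinuousOn (g i) (Icc 0 T)) →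
        -- (u,(yᵢ),(pᵢ)) is a C¹ solution of the multiple-network system
        (∀ t ∈ Icc (0:ℝ) T, HasDerivWithinAt u (u' t) (Icc 0 T) t) →
        ContinuousOn u' (Icc 0 T) →
        (∀ i, ∀ t ∈ Icc (0:ℝ) T, HasDerivWithinAt (y i) (y' i t) (Icc 0 T) t) →
        (∀ i, ContinuousOn (y' i) (Icc 0 T)) →
        (∀ i, ∀ t ∈ Icc (0:ℝ) T, HasDerivWithinAt (p i) (p' i t) (Icc 0 T) t) →
        (∀ i, ContinuousOn (p' i) (Icc 0 T)) →
        (∀ t ∈ Icc (0:ℝ) T, ∀ v : V, a (u t) v - ∑ i, d i v (p i t) = f t v) →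
        (∀ t ∈ Icc (0:ℝ) T, ∀ i, ∀ z : Z,
          (inner ℝ (ιZ (y i t)) (ιZ z) : ℝ) - dhat i z (p i t) = 0) →
        (∀ t ∈ Icc (0:ℝ) T, ∀ i, ∀ q : Q,
          d i (u' t) q + c (p' i t) q + dhat i (y i t) q
            - ∑ j ∈ Finset.univ.erase i, βm i j * (inner ℝ (p i t - p j t) q : ℝ)
            = g i t q) →
        -- (ū,(ȳᵢ),(p̄ᵢ)) solves the delay network system, with p̄ᵢ ∈ C²([−τ,T])
        (∀ t ∈ Icc (0:ℝ) T, HasDerivWithinAt ubar (ubar' t) (Icc 0 T) t) →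
        ContinuousOn ubar' (Icc 0 T) →
        (∀ i, ∀ t ∈ Icc (0:ℝ) T, HasDerivWithinAt (ybar i) (ybar' i t) (Icc 0 T) t) →
        (∀ i, ContinuousOn (ybar' i) (Icc 0 T)) →
        (∀ i, ∀ t ∈ Icc (-τ) T, HasDerivWithinAt (pbar i) (pbar' i t) (Icc (-τ) T) t) →
        (∀ i, ∀ t ∈ Icc (-τ) T, HasDerivWithinAt (pbar' i) (pbar'' i t) (Icc (-τ) T) t) →
        (∀ i, ContinuousOn (pbar'' i) (Icc (-τ) T)) →
        (∀ t ∈ Icc (0:ℝ) T, ∀ v : V,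
          a (ubar t) v - ∑ i, d i v (pbar i (t - τ)) = f t v) →
        (∀ t ∈ Icc (0:ℝ) T, ∀ i, ∀ z : Z,
          (inner ℝ (ιZ (ybar i t)) (ιZ z) : ℝ) - dhat i z (pbar i t) = 0) →
        (∀ t ∈ Icc (0:ℝ) T, ∀ i, ∀ q : Q,
          d i (ubar' t) q + c (pbar' i t) q + dhat i (ybar i t) q
            - ∑ j ∈ Finset.univ.erase i, βm i j * (inner ℝ (pbar i t - pbar j t) q : ℝ)
            = g i t q) →
        -- matching initial values
        ubar 0 = u 0 → (∀ i, ybar i 0 = y i 0) → (∀ i, pbar i 0 = p i 0) →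
        -- conclusion
        ∀ t ∈ Icc (0:ℝ) T,
          ‖ubar t - u t‖ ^ 2 + ∑ i, ‖pbar i t - p i t‖ ^ 2 +
              ∑ i, ∫ s in (0:ℝ)..t, ‖ιZ (ybar i s - y i s)‖ ^ 2 ≤
            C₁ * τ ^ 2 * m * (1 + Real.exp (C₂ * (1 + 4 * (m : ℝ) ^ 2 * β ^ 2) * t)) *
              (∑ i, (∫ s in (0:ℝ)..T, ‖pbar' i s‖ ^ 2) +
                (1 + τ ^ 2) * T *
                  ∑ i, (⨆ s : Icc (-τ) T, ‖pbar'' i (s : ℝ)‖) ^ 2) := by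
  let N : NetworkForms (Fin m) V Q Z HZ :=
    ⟨ιZ, a.mkContinuous₂ C_a fun u v => (Real.norm_eq_abs _).trans_le (ha_bdd u v), c,
      fun i => (d i).mkContinuous₂ (C_d i) fun v q => (Real.norm_eq_abs _).trans_le (hd_bdd i v q),
      fun i => (dhat i).mkContinuous₂ (C_dhat i) fun z q =>
        (Real.norm_eq_abs _).trans_le (hdhat_bdd i z q),
      c_a, c_c, C_d, hc_a, hc_c, ha_coer, hc_coer, hd_bdd⟩
  refine ⟨N.errorConst + 1, 2 + 1 / c_c ^ 2, by linarith [N.errorConst_nonneg], by positivity, ?_⟩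
  intro T τ β hT hτ hβ βm hβm f f' g u u' y y' p p' ubar ubar' ybar ybar' pbar pbar' pbar''
    _ _ _ _ hu _ hy _ hp _ hu_eq hy_eq hp_eq hubar _ hybar _ hpbar hpbar' hpbar''_cont
    hubar_eq hybar_eq hpbar_eq hu0 hy0 hp0 t ht
  have hE := N.isDelayError_sub hτ.le hu hy hp hu_eq hy_eq hp_eq hubar hybar hpbar hubar_eq
    hybar_eq hpbar_eq hu0 hy0 hp0
  have hP : T * ∑ i, (⨆ s : Icc (-τ) T, ‖pbar'' i (s : ℝ)‖) ^ 2 ≤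
      ∑ i, (∫ s in (0:ℝ)..T, ‖pbar' i s‖ ^ 2) +
        (1 + τ ^ 2) * T * ∑ i, (⨆ s : Icc (-τ) T, ‖pbar'' i (s : ℝ)‖) ^ 2 := by
    have : 0 ≤ ∑ i, ∫ s in (0:ℝ)..T, ‖pbar' i s‖ ^ 2 :=
      Finset.sum_nonneg fun i _ => intervalIntegral.integral_nonneg hT.le fun _ _ => by positivity
    nlinarith [mul_nonneg (mul_nonneg (sq_nonneg τ) hT.le)
      (by positivity : 0 ≤ ∑ i, (⨆ s : Icc (-τ) T, ‖pbar'' i (s : ℝ)‖) ^ 2)]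
  have := hE.sum_le_delay hT hβm hβ (by simpa using hm)
    (fun i => norm_comp_sub_sub_le hτ.le (hpbar' i) (hpbar''_cont i).norm_le_iSup_Icc) hP t ht
  rwa [Fintype.card_fin] at this

/-- The solutions of the multiple-network elliptic–parabolic system and of the
associated delay system differ by `O(τ)`: there are constants `C₁, C₂` depending only
on the constants of the bilinear forms (independent of `τ` and `t`) such that
`‖ū(t) − u(t)‖_V² + Σᵢ‖p̄ᵢ(t) − pᵢ(t)‖_Q² + Σᵢ∫₀ᵗ‖ȳᵢ − yᵢ‖_{H_Z}²
  ≤ C₁ τ² m (1 + e^{C₂(1+4m²β²)t}) P̄`. -/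
theorem stmt5 {V Z HZ Q : Type*}
    [NormedAddCommGroup V] [InnerProductSpace ℝ V] [CompleteSpace V]
    [NormedAddCommGroup Z] [InnerProductSpace ℝ Z] [CompleteSpace Z]
    [NormedAddCommGroup HZ] [InnerProductSpace ℝ HZ] [CompleteSpace HZ]
    [NormedAddCommGroup Q] [InnerProductSpace ℝ Q] [CompleteSpace Q]
    -- continuous embedding Z ↪ H_Z
    (ιZ : Z →L[ℝ] HZ) (hιZ : Function.Injective ιZ)
    (C_ZH : ℝ) (hCZH : ∀ z : Z, ‖ιZ z‖ ≤ C_ZH * ‖z‖)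
    -- number of networks
    (m : ℕ) (hm : 1 ≤ m)
    -- the bilinear forms and their constants
    (a : V →ₗ[ℝ] V →ₗ[ℝ] ℝ) (c : Q →ₗ[ℝ] Q →ₗ[ℝ] ℝ)
    (d : Fin m → V →ₗ[ℝ] Q →ₗ[ℝ] ℝ) (dhat : Fin m → Z →ₗ[ℝ] Q →ₗ[ℝ] ℝ)
    (c_a C_a c_c C_c : ℝ) (C_d C_dhat : Fin m → ℝ)
    (hc_a : 0 < c_a) (hc_c : 0 < c_c)
    (ha_symm : ∀ u v : V, a u v = a v u)
    (ha_coer : ∀ v : V, c_a * ‖v‖ ^ 2 ≤ a v v)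
    (ha_bdd : ∀ u v : V, |a u v| ≤ C_a * ‖u‖ * ‖v‖)
    (hc_symm : ∀ p q : Q, c p q = c q p)
    (hc_coer : ∀ q : Q, c_c * ‖q‖ ^ 2 ≤ c q q)
    (hc_bdd : ∀ p q : Q, |c p q| ≤ C_c * ‖p‖ * ‖q‖)
    (hd_bdd : ∀ (i : Fin m) (v : V) (q : Q), |d i v q| ≤ C_d i * ‖v‖ * ‖q‖)
    (hdhat_bdd : ∀ (i : Fin m) (z : Z) (q : Q), |dhat i z q| ≤ C_dhat i * ‖z‖ * ‖q‖) :
    ∃ C₁ C₂ : ℝ, 0 < C₁ ∧ 0 < C₂ ∧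
      ∀ (T τ β : ℝ), 0 < T → 0 < τ → 0 ≤ β →
      ∀ (βm : Fin m → Fin m → ℝ), (∀ i j : Fin m, i ≠ j → |βm i j| ≤ β) →
      ∀ (f f' : ℝ → V →L[ℝ] ℝ) (g : Fin m → ℝ → Q →L[ℝ] ℝ)
        (u u' : ℝ → V) (y y' : Fin m → ℝ → Z) (p p' : Fin m → ℝ → Q)
        (ubar ubar' : ℝ → V) (ybar ybar' : Fin m → ℝ → Z)
        (pbar pbar' pbar'' : Fin m → ℝ → Q),
        -- data: f continuously differentiable, the gᵢ continuous
        (∀ t ∈ Icc (0:ℝ) T, HasDerivWithinAt f (f' t) (Icc 0 T) t) →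
        ContinuousOn f (Icc 0 T) → ContinuousOn f' (Icc 0 T) →
        (∀ i, ContinuousOn (g i) (Icc 0 T)) →
        -- (u,(yᵢ),(pᵢ)) is a C¹ solution of the multiple-network system
        (∀ t ∈ Icc (0:ℝ) T, HasDerivWithinAt u (u' t) (Icc 0 T) t) →
        ContinuousOn u' (Icc 0 T) →
        (∀ i, ∀ t ∈ Icc (0:ℝ) T, HasDerivWithinAt (y i) (y' i t) (Icc 0 T) t) →
        (∀ i, ContinuousOn (y' i) (Icc 0 T)) →
        (∀ i, ∀ t ∈ Icc (0:ℝ) T, HasDerivWithinAt (p i) (p' i t) (Icc 0 T) t) →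
        (∀ i, ContinuousOn (p' i) (Icc 0 T)) →
        (∀ t ∈ Icc (0:ℝ) T, ∀ v : V, a (u t) v - ∑ i, d i v (p i t) = f t v) →
        (∀ t ∈ Icc (0:ℝ) T, ∀ i, ∀ z : Z,
          (inner ℝ (ιZ (y i t)) (ιZ z) : ℝ) - dhat i z (p i t) = 0) →
        (∀ t ∈ Icc (0:ℝ) T, ∀ i, ∀ q : Q,
          d i (u' t) q + c (p' i t) q + dhat i (y i t) q
            - ∑ j ∈ Finset.univ.erase i, βm i j * (inner ℝ (p i t - p j t) q : ℝ)
            = g i t q) →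
        -- (ū,(ȳᵢ),(p̄ᵢ)) solves the delay network system, with p̄ᵢ ∈ C²([−τ,T])
        (∀ t ∈ Icc (0:ℝ) T, HasDerivWithinAt ubar (ubar' t) (Icc 0 T) t) →
        ContinuousOn ubar' (Icc 0 T) →
        (∀ i, ∀ t ∈ Icc (0:ℝ) T, HasDerivWithinAt (ybar i) (ybar' i t) (Icc 0 T) t) →
        (∀ i, ContinuousOn (ybar' i) (Icc 0 T)) →
        (∀ i, ∀ t ∈ Icc (-τ) T, HasDerivWithinAt (pbar i) (pbar' i t) (Icc (-τ) T) t) →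
        (∀ i, ∀ t ∈ Icc (-τ) T, HasDerivWithinAt (pbar' i) (pbar'' i t) (Icc (-τ) T) t) →
        (∀ i, ContinuousOn (pbar'' i) (Icc (-τ) T)) →
        (∀ t ∈ Icc (0:ℝ) T, ∀ v : V,
          a (ubar t) v - ∑ i, d i v (pbar i (t - τ)) = f t v) →
        (∀ t ∈ Icc (0:ℝ) T, ∀ i, ∀ z : Z,
          (inner ℝ (ιZ (ybar i t)) (ιZ z) : ℝ) - dhat i z (pbar i t) = 0) →
        (∀ t ∈ Icc (0:ℝ) T, ∀ i, ∀ q : Q,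
          d i (ubar' t) q + c (pbar' i t) q + dhat i (ybar i t) q
            - ∑ j ∈ Finset.univ.erase i, βm i j * (inner ℝ (pbar i t - pbar j t) q : ℝ)
            = g i t q) →
        -- matching initial values
        ubar 0 = u 0 → (∀ i, ybar i 0 = y i 0) → (∀ i, pbar i 0 = p i 0) →
        -- conclusion
        ∀ t ∈ Icc (0:ℝ) T,
          ‖ubar t - u t‖ ^ 2 + ∑ i, ‖pbar i t - p i t‖ ^ 2 +
              ∑ i, ∫ s in (0:ℝ)..t, ‖ιZ (ybar i s - y i s)‖ ^ 2 ≤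
            C₁ * τ ^ 2 * m * (1 + Real.exp (C₂ * (1 + 4 * (m : ℝ) ^ 2 * β ^ 2) * t)) *
              (∑ i, (∫ s in (0:ℝ)..T, ‖pbar' i s‖ ^ 2) +
                (1 + τ ^ 2) * T *
                  ∑ i, (⨆ s : Icc (-τ) T, ‖pbar'' i (s : ℝ)‖) ^ 2) :=
  stmt5_general ιZ m hm a c d dhat c_a C_a c_c C_d C_dhat hc_a hc_c ha_coer ha_bdd hc_coer hd_bdd
    hdhat_bdd
end

section
/- Let ω ∈ ℝ and t₁ > 0. Let u : [0,t₁] → Q be continuous such that ι∘u is continuously differentiable with derivative u̇ : [0,t₁] → H, and let w : [0,t₁] → H and G : [0,t₁] → Q* be continuous. Assume that for every t ∈ [0,t₁] and every q ∈ Q: ⟨u̇(t), ι q⟩_H + (K u(t))(q) = ω ⟨w(t), ι q⟩_H + G(t)(q). Then for every t ∈ [0,t₁]: ‖ι u(t)‖_H² ≤ e^{2 κ_H t} ( ‖ι u(0)‖_H² + ∫₀ᵗ [ (ω² C_{Q↪H}² / κ_Q) ‖w(s)‖_H² + (1/κ_Q) ‖G(s)‖_{Q*}² ] ds ). -/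
/-!
Testing the equation with `q = u(t)` gives the energy identity
`d/dt ‖ι u‖² = 2 (ω ⟪w, ι u⟫ + G(u) - K(u)(u))`. The Gårding inequality turns `-K(u)(u)` into
`-κ_Q ‖u‖² + κ_H ‖ι u‖²`, and Young's inequality absorbs both forcing terms into `κ_Q ‖u‖²`,
leaving `d/dt ‖ι u‖² ≤ 2 κ_H ‖ι u‖² + f` with `f` the integrand of the bound. A Grönwall argument
with a time-dependent nonnegative forcing `f` concludes.
-/

open Set

theorem two_mul_add_mul_sub_le_div {A B x κ : ℝ} (hκ : 0 < κ) :
    2 * (A * x + B * x - κ * x ^ 2) ≤ (A ^ 2 + B ^ 2) / κ := by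
  rw [le_div_iff₀ hκ]
  nlinarith [sq_nonneg (A - κ * x), sq_nonneg (B - κ * x)]

theorem two_mul_forcing_sub_le_of_garding {Q H : Type*}
    [NormedAddCommGroup Q] [NormedSpace ℝ Q] [NormedAddCommGroup H] [InnerProductSpace ℝ H]
    {ι : Q → H} {C : ℝ} (hC : ∀ q, ‖ι q‖ ≤ C * ‖q‖) {K : Q →L[ℝ] Q →L[ℝ] ℝ} {κQ κH : ℝ}
    (hκQ : 0 < κQ) (hK : ∀ q, κQ * ‖q‖ ^ 2 - κH * ‖ι q‖ ^ 2 ≤ K q q)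
    (ω : ℝ) (w : H) (g : Q →L[ℝ] ℝ) (q : Q) :
    2 * (ω * inner ℝ w (ι q) + g q - K q q) ≤
      2 * κH * ‖ι q‖ ^ 2 + ((ω ^ 2 * C ^ 2 / κQ) * ‖w‖ ^ 2 + (1 / κQ) * ‖g‖ ^ 2) := by
  have hw : ω * inner ℝ w (ι q) ≤ |ω| * C * ‖w‖ * ‖q‖ :=
    calc ω * inner ℝ w (ι q) ≤ |ω| * (‖w‖ * ‖ι q‖) :=
          (le_abs_self _).trans ((abs_mul _ _).trans_le
            (mul_le_mul_of_nonneg_left (abs_real_inner_le_norm _ _) (abs_nonneg _)))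
      _ ≤ |ω| * (‖w‖ * (C * ‖q‖)) := by gcongr; exact hC q
      _ = |ω| * C * ‖w‖ * ‖q‖ := by ring
  have hg : g q ≤ ‖g‖ * ‖q‖ := (le_abs_self _).trans (g.le_opNorm q)
  have hyoung := two_mul_add_mul_sub_le_div (A := |ω| * C * ‖w‖) (B := ‖g‖) (x := ‖q‖) hκQ
  have hsq : (|ω| * C * ‖w‖) ^ 2 = ω ^ 2 * C ^ 2 * ‖w‖ ^ 2 := by rw [mul_pow, mul_pow, sq_abs]
  rw [hsq] at hyoung
  have hcoercive := hK q
  calc 2 * (ω * inner ℝ w (ι q) + g q - K q q)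
      ≤ 2 * (|ω| * C * ‖w‖ * ‖q‖ + ‖g‖ * ‖q‖ - κQ * ‖q‖ ^ 2) + 2 * κH * ‖ι q‖ ^ 2 := by linarith
    _ ≤ 2 * κH * ‖ι q‖ ^ 2 + ((ω ^ 2 * C ^ 2 / κQ) * ‖w‖ ^ 2 + (1 / κQ) * ‖g‖ ^ 2) := by
      have : (ω ^ 2 * C ^ 2 * ‖w‖ ^ 2 + ‖g‖ ^ 2) / κQ =
          (ω ^ 2 * C ^ 2 / κQ) * ‖w‖ ^ 2 + (1 / κQ) * ‖g‖ ^ 2 := by ring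
      linarith

theorem le_exp_mul_add_integral_of_deriv_le {φ φ' f : ℝ → ℝ} {a b c : ℝ}
    (hc : 0 ≤ c) (hφ : ∀ t ∈ Icc a b, HasDerivWithinAt φ (φ' t) (Icc a b) t)
    (hf : ContinuousOn f (Icc a b)) (hf₀ : ∀ t ∈ Ioo a b, 0 ≤ f t)
    (hφ' : ∀ t ∈ Ioo a b, φ' t ≤ c * φ t + f t) :
    ∀ t ∈ Icc a b, φ t ≤ Real.exp (c * (t - a)) * (φ a + ∫ s in a..t, f s) := by
  intro t ht
  have hab : a ≤ b := ht.1.trans ht.2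
  set F : ℝ → ℝ := fun t => ∫ s in a..t, f s
  have hF : ∀ t ∈ Ioo a b, HasDerivAt F (f t) t := fun t ht =>
    intervalIntegral.integral_hasDerivAt_right
      ((hf.mono (Icc_subset_Icc_right ht.2.le)).intervalIntegrable_of_Icc ht.1.le)
      (hf.mono Ioo_subset_Icc_self |>.stronglyMeasurableAtFilter isOpen_Ioo t ht)
      (hf.continuousAt (Icc_mem_nhds ht.1 ht.2))
  have hFc : ContinuousOn F (Icc a b) := by
    simpa only [uIcc_of_le hab] using
      intervalIntegral.continuousOn_primitive_interval (μ := MeasureTheory.volume)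
        (hf.integrableOn_Icc.mono_set (uIcc_of_le hab).subset)
  set E : ℝ → ℝ := fun s => Real.exp (-c * (s - a))
  set ψ : ℝ → ℝ := fun s => E s * φ s - F s
  -- ψ' = E (φ' - c φ) - f ≤ (E - 1) f ≤ 0, because 0 < E ≤ 1 on [a, b]
  have hψ : AntitoneOn ψ (Icc a b) := by
    have hE : ∀ s, HasDerivAt E (E s * -c) s := fun s =>
      (((hasDerivAt_id s).sub_const a).const_mul (-c)).exp.congr_deriv (by simp [E])
    refine antitoneOn_of_hasDerivWithinAt_nonpos (convex_Icc a b)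
      (f' := fun s => E s * -c * φ s + E s * φ' s - f s) ?_ ?_ ?_
    · exact (Continuous.continuousOn (by fun_prop)).mul
        (fun s hs => (hφ s hs).continuousWithinAt) |>.sub hFc
    · rw [interior_Icc]
      intro s hs
      exact ((hE s).hasDerivWithinAt.mul ((hφ s (Ioo_subset_Icc_self hs)).mono
        Ioo_subset_Icc_self)).sub (hF s hs).hasDerivWithinAt
    · rw [interior_Icc]
      intro s hs
      have hE₀ : 0 < E s := Real.exp_pos _
      have hE₁ : E s ≤ 1 := Real.exp_le_one_iff.mpr (by nlinarith [hs.1])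
      nlinarith [mul_le_mul_of_nonneg_left (hφ' s hs) hE₀.le,
        mul_le_mul_of_nonneg_right hE₁ (hf₀ s hs)]
  have hψt : ψ t ≤ ψ a := hψ ⟨le_rfl, hab⟩ ht ht.1
  have hEt : E t * Real.exp (c * (t - a)) = 1 := by
    rw [← Real.exp_add]; simp
  simp only [ψ, E, F, sub_self, mul_zero, Real.exp_zero, one_mul, intervalIntegral.integral_same,
    sub_zero] at hψt
  calc φ t = Real.exp (c * (t - a)) * (E t * φ t) := by
        rw [← mul_assoc, mul_comm _ (E t), hEt, one_mul]
    _ ≤ Real.exp (c * (t - a)) * (φ a + F t) := by gcongr; linarith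

theorem stmt8_general {Q H : Type*}
    [NormedAddCommGroup Q] [InnerProductSpace ℝ Q]
    [NormedAddCommGroup H] [InnerProductSpace ℝ H]
    (ι : Q →L[ℝ] H)
    (C_QH : ℝ) (hCQH : ∀ q : Q, ‖ι q‖ ≤ C_QH * ‖q‖)
    (K : Q →L[ℝ] Q →L[ℝ] ℝ) (κQ κH : ℝ) (hκQ : 0 < κQ) (hκH : 0 ≤ κH)
    (hGarding : ∀ q : Q, κQ * ‖q‖ ^ 2 - κH * ‖ι q‖ ^ 2 ≤ K q q)
    (ω t₁ : ℝ)
    (u : ℝ → Q) (udot : ℝ → H) (w : ℝ → H) (G : ℝ → Q →L[ℝ] ℝ)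
    (hder : ∀ t ∈ Icc (0:ℝ) t₁, HasDerivWithinAt (fun s => ι (u s)) (udot t) (Icc 0 t₁) t)
    (hw : ContinuousOn w (Icc 0 t₁)) (hG : ContinuousOn G (Icc 0 t₁))
    (heq : ∀ t ∈ Icc (0:ℝ) t₁, ∀ q : Q,
      (inner ℝ (udot t) (ι q) : ℝ) + K (u t) q = ω * (inner ℝ (w t) (ι q) : ℝ) + G t q) :
    ∀ t ∈ Icc (0:ℝ) t₁,
      ‖ι (u t)‖ ^ 2 ≤ Real.exp (2 * κH * t) * (‖ι (u 0)‖ ^ 2 +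
        ∫ s in (0:ℝ)..t, ((ω ^ 2 * C_QH ^ 2 / κQ) * ‖w s‖ ^ 2 + (1 / κQ) * ‖G s‖ ^ 2)) := by
  intro t ht
  have henergy : ∀ s ∈ Ioo (0:ℝ) t₁, 2 * inner ℝ (ι (u s)) (udot s) ≤ 2 * κH * ‖ι (u s)‖ ^ 2 +
      ((ω ^ 2 * C_QH ^ 2 / κQ) * ‖w s‖ ^ 2 + (1 / κQ) * ‖G s‖ ^ 2) := fun s hs => by
    have htest := heq s (Ioo_subset_Icc_self hs) (u s)
    rw [real_inner_comm]
    convert two_mul_forcing_sub_le_of_garding hCQH hκQ hGarding ω (w s) (G s) (u s) using 2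
    linarith
  simpa only [sub_zero] using
    le_exp_mul_add_integral_of_deriv_le (by positivity)
      (fun s hs => (hder s hs).norm_sq) (by fun_prop) (fun s _ => by positivity) henergy t ht

/-- Energy estimate for an abstract parabolic equation with a Gårding operator `K`:
`‖ι u(t)‖² ≤ e^{2κ_H t}(‖ι u(0)‖² + ∫₀ᵗ (ω²C²/κ_Q)‖w‖² + (1/κ_Q)‖G‖²)`. -/
theorem stmt8 {Q H : Type*}
    [NormedAddCommGroup Q] [InnerProductSpace ℝ Q] [CompleteSpace Q]
    [NormedAddCommGroup H] [InnerProductSpace ℝ H] [CompleteSpace H]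
    (ι : Q →L[ℝ] H) (hι : Function.Injective ι)
    (C_QH : ℝ) (hCQH : ∀ q : Q, ‖ι q‖ ≤ C_QH * ‖q‖)
    (K : Q →L[ℝ] Q →L[ℝ] ℝ) (κQ κH : ℝ) (hκQ : 0 < κQ) (hκH : 0 ≤ κH)
    (hGarding : ∀ q : Q, κQ * ‖q‖ ^ 2 - κH * ‖ι q‖ ^ 2 ≤ K q q)
    (ω t₁ : ℝ) (ht₁ : 0 < t₁)
    (u : ℝ → Q) (udot : ℝ → H) (w : ℝ → H) (G : ℝ → Q →L[ℝ] ℝ)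
    (hu : ContinuousOn u (Icc 0 t₁))
    (hder : ∀ t ∈ Icc (0:ℝ) t₁, HasDerivWithinAt (fun s => ι (u s)) (udot t) (Icc 0 t₁) t)
    (hudot : ContinuousOn udot (Icc 0 t₁))
    (hw : ContinuousOn w (Icc 0 t₁)) (hG : ContinuousOn G (Icc 0 t₁))
    (heq : ∀ t ∈ Icc (0:ℝ) t₁, ∀ q : Q,
      (inner ℝ (udot t) (ι q) : ℝ) + K (u t) q = ω * (inner ℝ (w t) (ι q) : ℝ) + G t q) :
    ∀ t ∈ Icc (0:ℝ) t₁,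
      ‖ι (u t)‖ ^ 2 ≤ Real.exp (2 * κH * t) * (‖ι (u 0)‖ ^ 2 +
        ∫ s in (0:ℝ)..t, ((ω ^ 2 * C_QH ^ 2 / κQ) * ‖w s‖ ^ 2 + (1 / κQ) * ‖G s‖ ^ 2)) :=
  stmt8_general ι C_QH hCQH K κQ κH hκQ hκH hGarding ω t₁ u udot w G hder hw hG heq
end

section
/- Let 0 < τ ≤ T, ω ∈ ℝ. Let g̃ : [0,T] → Q* be infinitely differentiable with sup_{t∈[0,T]} ‖g̃^{(j)}(t)‖_{Q*}² ≤ C_{g̃} for every j ≥ 0, and let p̄ : [−τ,T] → Q be infinitely differentiable with sup_{t∈[−τ,0]} ‖ι p̄^{(j)}(t)‖_H² ≤ C_Φ for every j ≥ 0, such that for every t ∈ (0,T] and every q ∈ Q: ⟨ι p̄′(t), ι q⟩_H + (K p̄(t))(q) = ω ⟨ι p̄′(t−τ), ι q⟩_H + g̃(t)(q). Then there exists a constant C depending only on ω, κ_Q, κ_H and C_{Q↪H} (in particular independent of τ and of ℓ) such that for every ℓ ≥ 0 and every t ∈ [0,T]: ‖ι p̄^{(ℓ)}(t)‖_H² ≤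 ( C_Φ + C_{g̃} T / κ_Q ) · e^{C T}. -/
open Set

lemma stmt9_iter_hasDerivAt {E : Type*} [NormedAddCommGroup E] [NormedSpace ℝ E]
    {f : ℝ → E} (hf : ContDiff ℝ (⊤ : ℕ∞) f) (n : ℕ) (x : ℝ) :
    HasDerivAt (deriv^[n] f) (deriv^[n+1] f x) x := by
  have h : ContDiff ℝ (⊤:ℕ∞) (deriv^[n] f) :=
    ContDiff.iterate_deriv n (hf.of_le (by exact (by simp)))
  have hd : Differentiable ℝ (deriv^[n] f) := h.differentiable (by simp)
  have := (hd x).hasDerivAt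
  rwa [Function.iterate_succ_apply']

lemma stmt9_iter_cont {E : Type*} [NormedAddCommGroup E] [NormedSpace ℝ E]
    {f : ℝ → E} (hf : ContDiff ℝ (⊤ : ℕ∞) f) (n : ℕ) : Continuous (deriv^[n] f) :=
  (ContDiff.iterate_deriv n (hf.of_le (by exact (by simp))) : ContDiff ℝ (⊤:ℕ∞) _).continuous

lemma stmt9_zero_deriv {f f' : ℝ → ℝ} (hf : ∀ x, HasDerivAt f (f' x) x)
    (hc : Continuous f') {T : ℝ} (h0 : ∀ t ∈ Ioc (0:ℝ) T, f t = 0) :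
    ∀ t ∈ Ioc (0:ℝ) T, f' t = 0 := by
  have hIoo : ∀ t ∈ Ioo (0:ℝ) T, f' t = 0 := by
    intro t ht
    have hev : f =ᶠ[nhds t] (fun _ => (0:ℝ)) :=
      Filter.eventuallyEq_of_mem (Ioo_mem_nhds ht.1 ht.2)
        (fun x hx => h0 x (Ioo_subset_Ioc_self hx))
    have hd : deriv f t = 0 := by rw [hev.deriv_eq]; simp
    rw [← (hf t).deriv]; exact hd
  intro t ht
  rcases lt_or_eq_of_le ht.2 with hlt | hT
  · exact hIoo t ⟨ht.1, hlt⟩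
  · subst hT
    have h1 : Filter.Tendsto f' (nhdsWithin t (Iio t)) (nhds (f' t)) :=
      (hc.tendsto t).mono_left nhdsWithin_le_nhds
    have h2 : Filter.Tendsto f' (nhdsWithin t (Iio t)) (nhds 0) := by
      apply Filter.Tendsto.congr' _ tendsto_const_nhds
      filter_upwards [Ioo_mem_nhdsLT_of_mem (⟨ht.1, le_refl t⟩ : t ∈ Ioc (0:ℝ) t)] with x hx
      exact (hIoo x hx).symm
    exact tendsto_nhds_unique h1 h2

lemma stmt9_cmp {f g f' g' : ℝ → ℝ} (hf : ∀ x, HasDerivAt f (f' x) x)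
    (hg : ∀ x, HasDerivAt g (g' x) x) {s : ℝ} (hs : 0 ≤ s) (h0 : f 0 ≤ g 0)
    (hle : ∀ x ∈ Ioo (0:ℝ) s, f' x ≤ g' x) : f s ≤ g s := by
  rcases eq_or_lt_of_le hs with h | h
  · rwa [← h]
  · have hh : ∀ x, HasDerivAt (fun y => g y - f y) (g' x - f' x) x :=
      fun x => (hg x).sub (hf x)
    have hdiff : Differentiable ℝ (fun y => g y - f y) := fun x => (hh x).differentiableAt
    have hmono : MonotoneOn (fun y => g y - f y) (Icc 0 s) := by
      apply monotoneOn_of_deriv_nonneg (convex_Icc 0 s) hdiff.continuous.continuousOn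
        (fun x _ => (hdiff x).differentiableWithinAt)
      intro x hx
      rw [interior_Icc] at hx
      rw [(hh x).deriv]
      linarith [hle x hx]
    have := hmono ⟨le_refl 0, hs⟩ ⟨hs, le_refl s⟩ hs
    dsimp at this; linarith

set_option maxHeartbeats 2000000 in
/-- Uniform bounds on all derivatives of the solution of the neutral delay equation
`⟨ṗ̄(t), q⟩ + ⟨K p̄(t), q⟩ = ω ⟨ṗ̄(t−τ), q⟩ + ⟨g̃(t), q⟩`: there is a constant `C`
depending only on `ω, κ_Q, κ_H, C_{Q↪H}` (independent of `τ` and `ℓ`) with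
`‖ι p̄^{(ℓ)}(t)‖² ≤ (C_Φ + C_g̃ T/κ_Q) e^{CT}` on `[0,T]`. -/
theorem stmt9 {Q H : Type*}
    [NormedAddCommGroup Q] [InnerProductSpace ℝ Q] [CompleteSpace Q]
    [NormedAddCommGroup H] [InnerProductSpace ℝ H] [CompleteSpace H]
    (ι : Q →L[ℝ] H) (hι : Function.Injective ι)
    (C_QH : ℝ) (hCQH : ∀ q : Q, ‖ι q‖ ≤ C_QH * ‖q‖)
    (K : Q →L[ℝ] Q →L[ℝ] ℝ) (κQ κH : ℝ) (hκQ : 0 < κQ) (hκH : 0 ≤ κH)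
    (hGarding : ∀ q : Q, κQ * ‖q‖ ^ 2 - κH * ‖ι q‖ ^ 2 ≤ K q q)
    (ω : ℝ) :
    ∃ C : ℝ, ∀ (τ T : ℝ), 0 < τ → τ ≤ T →
      ∀ (gt : ℝ → Q →L[ℝ] ℝ) (pbar : ℝ → Q) (C_g C_Φ : ℝ),
        ContDiff ℝ (⊤ : ℕ∞) gt → ContDiff ℝ (⊤ : ℕ∞) pbar →
        (∀ j : ℕ, ∀ t ∈ Icc (0:ℝ) T, ‖iteratedDeriv j gt t‖ ^ 2 ≤ C_g) →
        (∀ j : ℕ, ∀ t ∈ Icc (-τ) (0:ℝ), ‖ι (iteratedDeriv j pbar t)‖ ^ 2 ≤ C_Φ) →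
        (∀ t ∈ Ioc (0:ℝ) T, ∀ q : Q,
          (inner ℝ (ι (deriv pbar t)) (ι q) : ℝ) + K (pbar t) q
            = ω * (inner ℝ (ι (deriv pbar (t - τ))) (ι q) : ℝ) + gt t q) →
        ∀ ℓ : ℕ, ∀ t ∈ Icc (0:ℝ) T,
          ‖ι (iteratedDeriv ℓ pbar t)‖ ^ 2 ≤ (C_Φ + C_g * T / κQ) * Real.exp (C * T) := by
  refine ⟨2*κH + 3*|ω|, ?_⟩
  intro τ T hτ hτT gt pbar C_g C_Φ hgtc hpc hCg hCΦ heq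
  have hud : ∀ n x, HasDerivAt (deriv^[n] pbar) (deriv^[n+1] pbar x) x :=
    fun n x => stmt9_iter_hasDerivAt hpc n x
  have hgd : ∀ n x, HasDerivAt (deriv^[n] gt) (deriv^[n+1] gt x) x :=
    fun n x => stmt9_iter_hasDerivAt hgtc n x
  have hucont : ∀ n, Continuous (deriv^[n] pbar) := fun n => stmt9_iter_cont hpc n
  have hgcont : ∀ n, Continuous (deriv^[n] gt) := fun n => stmt9_iter_cont hgtc n
  have hCΦ' : ∀ j : ℕ, ∀ t ∈ Icc (-τ) (0:ℝ), ‖ι (deriv^[j] pbar t)‖ ^ 2 ≤ C_Φ := by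
    intro j t ht; have := hCΦ j t ht; rwa [iteratedDeriv_eq_iterate] at this
  have hCg' : ∀ j : ℕ, ∀ t ∈ Icc (0:ℝ) T, ‖deriv^[j] gt t‖ ^ 2 ≤ C_g := by
    intro j t ht; have := hCg j t ht; rwa [iteratedDeriv_eq_iterate] at this
  have hT0 : (0:ℝ) < T := lt_of_lt_of_le hτ hτT
  have hCΦ0 : 0 ≤ C_Φ :=
    le_trans (sq_nonneg _) (hCΦ' 0 0 ⟨neg_nonpos.2 hτ.le, le_refl 0⟩)
  have hCg0 : 0 ≤ C_g := le_trans (sq_nonneg _) (hCg' 0 0 ⟨le_refl 0, hT0.le⟩)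
  have hb : (0:ℝ) ≤ |ω| := abs_nonneg ω
  have ha : (0:ℝ) ≤ 2*κH + |ω| := by positivity
  have hc : (0:ℝ) ≤ C_g / κQ := div_nonneg hCg0 hκQ.le
  have hc₀ : (0:ℝ) ≤ |ω| * C_Φ + C_g / κQ := by positivity
  -- the differentiated equation
  have hP : ∀ n : ℕ, ∀ q : Q, ∀ t ∈ Ioc (0:ℝ) T,
      (inner ℝ (ι (deriv^[n+1] pbar t)) (ι q) : ℝ) + K (deriv^[n] pbar t) q
        - (ω * (inner ℝ (ι (deriv^[n+1] pbar (t - τ))) (ι q) : ℝ) + (deriv^[n] gt t) q) = 0 := by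
    intro n
    induction n with
    | zero =>
      intro q t ht
      have := heq t ht q
      simp only [zero_add, Function.iterate_one, Function.iterate_zero, id_eq] at this ⊢
      linarith
    | succ n ih =>
      intro q
      have hA : ∀ (m : ℕ) (x : ℝ), HasDerivAt (fun s => (inner ℝ (ι (deriv^[m] pbar s)) (ι q) : ℝ))
          ((inner ℝ (ι (deriv^[m+1] pbar x)) (ι q) : ℝ)) x := by
        intro m x
        have hv : HasDerivAt (fun r => ι (deriv^[m] pbar r)) (ι (deriv^[m+1] pbar x)) x :=
          ι.hasFDerivAt.comp_hasDerivAt x (hud m x)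
        simpa using HasDerivAt.inner ℝ hv (hasDerivAt_const x (ι q))
      have hAd : ∀ (m : ℕ) (x : ℝ), HasDerivAt
          (fun s => (inner ℝ (ι (deriv^[m] pbar (s - τ))) (ι q) : ℝ))
          ((inner ℝ (ι (deriv^[m+1] pbar (x - τ))) (ι q) : ℝ)) x := by
        intro m x
        have hshift : HasDerivAt (fun s : ℝ => deriv^[m] pbar (s - τ))
            (deriv^[m+1] pbar (x - τ)) x := by
          have h2 : HasDerivAt (fun s : ℝ => s - τ) 1 x := (hasDerivAt_id x).sub_const τ
          have := HasDerivAt.scomp x (hud m (x - τ)) h2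
          simpa [Function.comp_def] using this
        have hv : HasDerivAt (fun r => ι (deriv^[m] pbar (r - τ)))
            (ι (deriv^[m+1] pbar (x - τ))) x :=
          ι.hasFDerivAt.comp_hasDerivAt x hshift
        simpa using HasDerivAt.inner ℝ hv (hasDerivAt_const x (ι q))
      have hK' : ∀ (m : ℕ) (x : ℝ), HasDerivAt (fun s => K (deriv^[m] pbar s) q)
          (K (deriv^[m+1] pbar x) q) x :=
        fun m x => by simpa [Function.comp_def] using (K.flip q).hasFDerivAt.comp_hasDerivAt x (hud m x)
      have hg' : ∀ (m : ℕ) (x : ℝ), HasDerivAt (fun s => (deriv^[m] gt s) q)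
          ((deriv^[m+1] gt x) q) x :=
        fun m x => by
          simpa [Function.comp_def] using (ContinuousLinearMap.apply ℝ ℝ q).hasFDerivAt.comp_hasDerivAt x (hgd m x)
      have hFd : ∀ x, HasDerivAt
          (fun s => (inner ℝ (ι (deriv^[n+1] pbar s)) (ι q) : ℝ) + K (deriv^[n] pbar s) q
            - (ω * (inner ℝ (ι (deriv^[n+1] pbar (s - τ))) (ι q) : ℝ) + (deriv^[n] gt s) q))
          ((inner ℝ (ι (deriv^[n+1+1] pbar x)) (ι q) : ℝ) + K (deriv^[n+1] pbar x) q
            - (ω * (inner ℝ (ι (deriv^[n+1+1] pbar (x - τ))) (ι q) : ℝ) + (deriv^[n+1] gt x) q)) x :=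
        fun x => ((hA (n+1) x).add (hK' n x)).sub
          (((hAd (n+1) x).const_mul ω).add (hg' n x))
      have hFc : Continuous (fun x =>
          (inner ℝ (ι (deriv^[n+1+1] pbar x)) (ι q) : ℝ) + K (deriv^[n+1] pbar x) q
            - (ω * (inner ℝ (ι (deriv^[n+1+1] pbar (x - τ))) (ι q) : ℝ) + (deriv^[n+1] gt x) q)) := by
        have hc1 : ∀ m : ℕ, Continuous fun s : ℝ => ι (deriv^[m] pbar s) :=
          fun m => ι.continuous.comp (hucont m)
        have hc2 : Continuous fun s : ℝ => s - τ := continuous_sub_right τ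
        exact (((hc1 (n+1+1)).inner continuous_const).add
            (((K.flip q).continuous).comp (hucont (n+1)))).sub
          ((continuous_const.mul (((hc1 (n+1+1)).comp hc2).inner continuous_const)).add
            (((ContinuousLinearMap.apply ℝ ℝ q).continuous).comp (hgcont (n+1))))
      exact stmt9_zero_deriv hFd hFc (fun s hs => ih q s hs)
  -- pointwise energy estimate
  have hEst : ∀ (j : ℕ), ∀ s ∈ Ioc (0:ℝ) T,
      2 * (inner ℝ (ι (deriv^[j+1] pbar s)) (ι (deriv^[j] pbar s)) : ℝ)
        ≤ (2*κH + |ω|) * ‖ι (deriv^[j] pbar s)‖^2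
          + |ω| * ‖ι (deriv^[j+1] pbar (s - τ))‖^2 + C_g / κQ := by
    intro j s hs
    have heqn := hP j (deriv^[j] pbar s) s hs
    have hG := hGarding (deriv^[j] pbar s)
    have h3 : ω * (inner ℝ (ι (deriv^[j+1] pbar (s - τ))) (ι (deriv^[j] pbar s)) : ℝ)
        ≤ |ω| * (‖ι (deriv^[j+1] pbar (s - τ))‖ * ‖ι (deriv^[j] pbar s)‖) := by
      calc ω * (inner ℝ (ι (deriv^[j+1] pbar (s - τ))) (ι (deriv^[j] pbar s)) : ℝ)
          ≤ |ω * (inner ℝ (ι (deriv^[j+1] pbar (s - τ))) (ι (deriv^[j] pbar s)) : ℝ)| :=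
            le_abs_self _
        _ = |ω| * |(inner ℝ (ι (deriv^[j+1] pbar (s - τ))) (ι (deriv^[j] pbar s)) : ℝ)| :=
            abs_mul _ _
        _ ≤ |ω| * (‖ι (deriv^[j+1] pbar (s - τ))‖ * ‖ι (deriv^[j] pbar s)‖) :=
            mul_le_mul_of_nonneg_left (abs_real_inner_le_norm _ _) hb
    have h4 : (deriv^[j] gt s) (deriv^[j] pbar s) ≤ ‖deriv^[j] gt s‖ * ‖deriv^[j] pbar s‖ := by
      have := (deriv^[j] gt s).le_opNorm (deriv^[j] pbar s)
      have h' : (deriv^[j] gt s) (deriv^[j] pbar s) ≤ ‖(deriv^[j] gt s) (deriv^[j] pbar s)‖ :=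
        le_abs_self _
      linarith
    have h5 : ‖deriv^[j] gt s‖ ^ 2 ≤ C_g := hCg' j s ⟨hs.1.le, hs.2⟩
    have hg2 : 2 * (‖deriv^[j] gt s‖ * ‖deriv^[j] pbar s‖)
        ≤ C_g / κQ + κQ * ‖deriv^[j] pbar s‖^2 := by
      have hkey : κQ * (2 * (‖deriv^[j] gt s‖ * ‖deriv^[j] pbar s‖))
          ≤ κQ * (C_g / κQ + κQ * ‖deriv^[j] pbar s‖^2) := by
        have h6 : κQ * (C_g / κQ) = C_g := mul_div_cancel₀ _ (ne_of_gt hκQ)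
        nlinarith [sq_nonneg (‖deriv^[j] gt s‖ - κQ * ‖deriv^[j] pbar s‖)]
      exact le_of_mul_le_mul_left hkey hκQ
    nlinarith [mul_nonneg hb
        (sq_nonneg (‖ι (deriv^[j+1] pbar (s - τ))‖ - ‖ι (deriv^[j] pbar s)‖)),
      mul_nonneg hκQ.le (sq_nonneg (‖deriv^[j] pbar s‖))]
  -- derivative of the weighted energy
  have hW : ∀ (j : ℕ) (s : ℝ), HasDerivAt
      (fun r => Real.exp (-((2*κH + |ω|) * r)) * ‖ι (deriv^[j] pbar r)‖^2)
      (Real.exp (-((2*κH + |ω|) * s)) *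
        (2 * (inner ℝ (ι (deriv^[j+1] pbar s)) (ι (deriv^[j] pbar s)) : ℝ)
          - (2*κH + |ω|) * ‖ι (deriv^[j] pbar s)‖^2)) s := by
    intro j s
    have hE : HasDerivAt (fun r => ‖ι (deriv^[j] pbar r)‖^2)
        (2 * (inner ℝ (ι (deriv^[j+1] pbar s)) (ι (deriv^[j] pbar s)) : ℝ)) s := by
      have hv : HasDerivAt (fun r => ι (deriv^[j] pbar r)) (ι (deriv^[j+1] pbar s)) s :=
        ι.hasFDerivAt.comp_hasDerivAt s (hud j s)
      have h := HasDerivAt.inner ℝ hv hv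
      have heqf : (fun r => ‖ι (deriv^[j] pbar r)‖^2)
          = fun r => (inner ℝ (ι (deriv^[j] pbar r)) (ι (deriv^[j] pbar r)) : ℝ) := by
        funext r; rw [real_inner_self_eq_norm_sq]
      rw [heqf]
      refine h.congr_deriv ?_
      rw [real_inner_comm]; ring
    have hexp : HasDerivAt (fun r : ℝ => Real.exp (-((2*κH + |ω|) * r)))
        (Real.exp (-((2*κH + |ω|) * s)) * (-(2*κH + |ω|))) s := by
      have h1 : HasDerivAt (fun r : ℝ => -((2*κH + |ω|) * r)) (-(2*κH + |ω|)) s := by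
        simpa [Pi.neg_def] using ((hasDerivAt_id s).const_mul (2*κH + |ω|)).neg
      exact h1.exp
    have := hexp.mul hE
    refine this.congr_deriv ?_
    ring
  -- derivative of the comparison function ψ
  have hψ : ∀ s : ℝ, HasDerivAt
      (fun r => (C_Φ + (|ω| * C_Φ + C_g / κQ) * r) * Real.exp (|ω| * r))
      ((|ω| * C_Φ + C_g / κQ) * Real.exp (|ω| * s)
        + |ω| * ((C_Φ + (|ω| * C_Φ + C_g / κQ) * s) * Real.exp (|ω| * s))) s := by
    intro s
    have h1 : HasDerivAt (fun r : ℝ => C_Φ + (|ω| * C_Φ + C_g / κQ) * r)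
        (|ω| * C_Φ + C_g / κQ) s := by
      simpa using ((hasDerivAt_id s).const_mul (|ω| * C_Φ + C_g / κQ)).const_add C_Φ
    have h2 : HasDerivAt (fun r : ℝ => Real.exp (|ω| * r)) (Real.exp (|ω| * s) * |ω|) s := by
      simpa using ((hasDerivAt_id s).const_mul |ω|).exp
    have := h1.mul h2
    refine this.congr_deriv ?_
    ring
  have hψnn : ∀ s : ℝ, 0 ≤ s →
      0 ≤ (C_Φ + (|ω| * C_Φ + C_g / κQ) * s) * Real.exp (|ω| * s) := by
    intro s hs
    have h1 : 0 ≤ C_Φ + (|ω| * C_Φ + C_g / κQ) * s := by nlinarith [mul_nonneg hc₀ hs]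
    exact mul_nonneg h1 (Real.exp_pos _).le
  have hψmono : ∀ s₁ s₂ : ℝ, 0 ≤ s₁ → s₁ ≤ s₂ →
      (C_Φ + (|ω| * C_Φ + C_g / κQ) * s₁) * Real.exp (|ω| * s₁)
        ≤ (C_Φ + (|ω| * C_Φ + C_g / κQ) * s₂) * Real.exp (|ω| * s₂) := by
    intro s₁ s₂ h1 h2
    have h3 : 0 ≤ C_Φ + (|ω| * C_Φ + C_g / κQ) * s₂ := by
      nlinarith [mul_nonneg hc₀ (h1.trans h2)]
    apply mul_le_mul _ (Real.exp_le_exp.2 (by nlinarith)) (Real.exp_pos _).le h3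
    nlinarith [mul_nonneg hc₀ (sub_nonneg.2 h2)]
  -- main delayed-Grönwall induction
  have keyk : ∀ k : ℕ, ∀ j : ℕ, ∀ s, s ∈ Icc (0:ℝ) T → s ≤ (k:ℝ) * τ →
      Real.exp (-((2*κH + |ω|) * s)) * ‖ι (deriv^[j] pbar s)‖^2
        ≤ (C_Φ + (|ω| * C_Φ + C_g / κQ) * s) * Real.exp (|ω| * s) := by
    intro k
    induction k with
    | zero =>
      intro j s hsm hsk
      have hs0 : s = 0 := le_antisymm (by simpa using hsk) hsm.1
      subst hs0
      simpa using hCΦ' j 0 ⟨neg_nonpos.2 hτ.le, le_refl 0⟩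
    | succ k ih =>
      intro j s hsm hsk
      have h00 : Real.exp (-((2*κH + |ω|) * 0)) * ‖ι (deriv^[j] pbar 0)‖^2
          ≤ (C_Φ + (|ω| * C_Φ + C_g / κQ) * 0) * Real.exp (|ω| * 0) := by
        simpa using hCΦ' j 0 ⟨neg_nonpos.2 hτ.le, le_refl 0⟩
      refine stmt9_cmp (hW j) hψ hsm.1 h00 ?_
      intro x hx
      have hxT : x ∈ Ioc (0:ℝ) T := ⟨hx.1, hx.2.le.trans hsm.2⟩
      have hest := hEst j x hxT
      have hexp1 : Real.exp (-((2*κH + |ω|) * x)) ≤ 1 :=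
        Real.exp_le_one_iff.2 (by nlinarith [hx.1.le])
      have hexppos : (0:ℝ) < Real.exp (-((2*κH + |ω|) * x)) := Real.exp_pos _
      have hebx : (1:ℝ) ≤ Real.exp (|ω| * x) :=
        Real.one_le_exp (mul_nonneg hb hx.1.le)
      have hψx : 0 ≤ (C_Φ + (|ω| * C_Φ + C_g / κQ) * x) * Real.exp (|ω| * x) :=
        hψnn x hx.1.le
      -- bound on the weighted delayed term
      have hdel : Real.exp (-((2*κH + |ω|) * x)) * ‖ι (deriv^[j+1] pbar (x - τ))‖^2
          ≤ C_Φ + (C_Φ + (|ω| * C_Φ + C_g / κQ) * x) * Real.exp (|ω| * x) := by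
        by_cases hcase : x ≤ τ
        · have hXm : x - τ ∈ Icc (-τ) (0:ℝ) := ⟨by linarith [hx.1.le], by linarith⟩
          have hX : ‖ι (deriv^[j+1] pbar (x - τ))‖^2 ≤ C_Φ := hCΦ' (j+1) (x - τ) hXm
          have h7 : Real.exp (-((2*κH + |ω|) * x)) * ‖ι (deriv^[j+1] pbar (x - τ))‖^2
              ≤ ‖ι (deriv^[j+1] pbar (x - τ))‖^2 :=
            mul_le_of_le_one_left (sq_nonneg _) hexp1
          linarith
        · push_neg at hcase
          have hx2 : x - τ ∈ Icc (0:ℝ) T := ⟨by linarith, by linarith [hsm.2, hx.2, hτ]⟩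
          have hx3 : x - τ ≤ (k:ℝ) * τ := by
            push_cast at hsk
            have hxs : x ≤ s := hx.2.le
            linarith
          have hih := ih (j+1) (x - τ) hx2 hx3
          have hsplit : Real.exp (-((2*κH + |ω|) * x))
              = Real.exp (-((2*κH + |ω|) * τ)) * Real.exp (-((2*κH + |ω|) * (x - τ))) := by
            rw [← Real.exp_add]; congr 1; ring
          have hexpτ : Real.exp (-((2*κH + |ω|) * τ)) ≤ 1 :=
            Real.exp_le_one_iff.2 (by nlinarith [hτ.le])
          have hmid : 0 ≤ Real.exp (-((2*κH + |ω|) * (x - τ))) * ‖ι (deriv^[j+1] pbar (x - τ))‖^2 :=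
            mul_nonneg (Real.exp_pos _).le (sq_nonneg _)
          calc Real.exp (-((2*κH + |ω|) * x)) * ‖ι (deriv^[j+1] pbar (x - τ))‖^2
              = Real.exp (-((2*κH + |ω|) * τ))
                  * (Real.exp (-((2*κH + |ω|) * (x - τ))) * ‖ι (deriv^[j+1] pbar (x - τ))‖^2) := by
                rw [hsplit]; ring
            _ ≤ 1 * ((C_Φ + (|ω| * C_Φ + C_g / κQ) * (x - τ)) * Real.exp (|ω| * (x - τ))) :=
                mul_le_mul hexpτ hih hmid zero_le_one
            _ = (C_Φ + (|ω| * C_Φ + C_g / κQ) * (x - τ)) * Real.exp (|ω| * (x - τ)) := one_mul _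
            _ ≤ (C_Φ + (|ω| * C_Φ + C_g / κQ) * x) * Real.exp (|ω| * x) :=
                hψmono (x - τ) x (by linarith) (by linarith)
            _ ≤ C_Φ + (C_Φ + (|ω| * C_Φ + C_g / κQ) * x) * Real.exp (|ω| * x) := by linarith
      -- assemble the derivative inequality
      have hstep1 : Real.exp (-((2*κH + |ω|) * x)) *
          (2 * (inner ℝ (ι (deriv^[j+1] pbar x)) (ι (deriv^[j] pbar x)) : ℝ)
            - (2*κH + |ω|) * ‖ι (deriv^[j] pbar x)‖^2)
          ≤ Real.exp (-((2*κH + |ω|) * x)) *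
            (|ω| * ‖ι (deriv^[j+1] pbar (x - τ))‖^2 + C_g / κQ) :=
        mul_le_mul_of_nonneg_left (by linarith) hexppos.le
      have hstep2 : Real.exp (-((2*κH + |ω|) * x)) *
          (|ω| * ‖ι (deriv^[j+1] pbar (x - τ))‖^2 + C_g / κQ)
          = |ω| * (Real.exp (-((2*κH + |ω|) * x)) * ‖ι (deriv^[j+1] pbar (x - τ))‖^2)
            + C_g / κQ * Real.exp (-((2*κH + |ω|) * x)) := by ring
      have hstep3 : |ω| * (Real.exp (-((2*κH + |ω|) * x)) * ‖ι (deriv^[j+1] pbar (x - τ))‖^2)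
          ≤ |ω| * (C_Φ + (C_Φ + (|ω| * C_Φ + C_g / κQ) * x) * Real.exp (|ω| * x)) :=
        mul_le_mul_of_nonneg_left hdel hb
      have hstep4 : C_g / κQ * Real.exp (-((2*κH + |ω|) * x)) ≤ C_g / κQ :=
        mul_le_of_le_one_right hc hexp1
      have hstep5 : |ω| * C_Φ + C_g / κQ ≤ (|ω| * C_Φ + C_g / κQ) * Real.exp (|ω| * x) :=
        le_mul_of_one_le_right hc₀ hebx
      nlinarith [mul_nonneg hb hψx]
  -- conclusion
  intro ℓ t ht
  obtain ⟨k, hk⟩ := exists_nat_ge (T / τ)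
  have hkτ : T ≤ (k:ℝ) * τ := by
    rw [div_le_iff₀ hτ] at hk
    linarith
  have hkey := keyk k ℓ t ht (ht.2.trans hkτ)
  rw [iteratedDeriv_eq_iterate]
  have hE1 : ‖ι (deriv^[ℓ] pbar t)‖^2
      ≤ Real.exp ((2*κH + |ω|) * t)
        * ((C_Φ + (|ω| * C_Φ + C_g / κQ) * t) * Real.exp (|ω| * t)) := by
    have h := mul_le_mul_of_nonneg_left hkey (Real.exp_pos ((2*κH + |ω|) * t)).le
    calc ‖ι (deriv^[ℓ] pbar t)‖^2
        = Real.exp ((2*κH + |ω|) * t)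
            * (Real.exp (-((2*κH + |ω|) * t)) * ‖ι (deriv^[ℓ] pbar t)‖^2) := by
          rw [← mul_assoc, ← Real.exp_add]; simp
      _ ≤ Real.exp ((2*κH + |ω|) * t)
            * ((C_Φ + (|ω| * C_Φ + C_g / κQ) * t) * Real.exp (|ω| * t)) := h
  have hXnn : 0 ≤ C_Φ + C_g * T / κQ :=
    add_nonneg hCΦ0 (div_nonneg (mul_nonneg hCg0 hT0.le) hκQ.le)
  have e1 : Real.exp ((2*κH + |ω|) * t) * Real.exp (|ω| * t)
      = Real.exp ((2*κH + 2*|ω|) * t) := by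
    rw [← Real.exp_add]; congr 1; ring
  have e2 : Real.exp ((2*κH + 2*|ω|) * t) ≤ Real.exp ((2*κH + 2*|ω|) * T) :=
    Real.exp_le_exp.2 (by nlinarith [ht.1, ht.2])
  have e3 : Real.exp ((2*κH + 3*|ω|) * T)
      = Real.exp (|ω| * T) * Real.exp ((2*κH + 2*|ω|) * T) := by
    rw [← Real.exp_add]; congr 1; ring
  have hA1 : C_Φ + (|ω| * C_Φ + C_g / κQ) * t ≤ (C_Φ + C_g * T / κQ) * (1 + |ω| * T) := by
    have ht1 := ht.1
    have ht2 := ht.2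
    have hq1 : C_g / κQ * t ≤ C_g * T / κQ := by
      rw [div_mul_eq_mul_div, div_le_div_iff₀ hκQ hκQ]
      nlinarith [mul_nonneg (mul_nonneg hCg0 (sub_nonneg.2 ht2)) hκQ.le]
    nlinarith [mul_nonneg (mul_nonneg hb hCΦ0) (sub_nonneg.2 ht2),
      mul_nonneg (div_nonneg (mul_nonneg hCg0 hT0.le) hκQ.le) (mul_nonneg hb hT0.le)]
  have hA2 : (1:ℝ) + |ω| * T ≤ Real.exp (|ω| * T) := by
    linarith [Real.add_one_le_exp (|ω| * T)]
  have h1T : (0:ℝ) ≤ 1 + |ω| * T := by positivity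
  calc ‖ι (deriv^[ℓ] pbar t)‖^2
      ≤ Real.exp ((2*κH + |ω|) * t)
          * ((C_Φ + (|ω| * C_Φ + C_g / κQ) * t) * Real.exp (|ω| * t)) := hE1
    _ = (C_Φ + (|ω| * C_Φ + C_g / κQ) * t)
          * (Real.exp ((2*κH + |ω|) * t) * Real.exp (|ω| * t)) := by ring
    _ = (C_Φ + (|ω| * C_Φ + C_g / κQ) * t) * Real.exp ((2*κH + 2*|ω|) * t) := by rw [e1]
    _ ≤ ((C_Φ + C_g * T / κQ) * (1 + |ω| * T)) * Real.exp ((2*κH + 2*|ω|) * T) := by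
        apply mul_le_mul hA1 e2 (Real.exp_pos _).le (mul_nonneg hXnn h1T)
    _ ≤ ((C_Φ + C_g * T / κQ) * Real.exp (|ω| * T)) * Real.exp ((2*κH + 2*|ω|) * T) := by
        apply mul_le_mul_of_nonneg_right (mul_le_mul_of_nonneg_left hA2 hXnn)
          (Real.exp_pos _).le
    _ = (C_Φ + C_g * T / κQ) * Real.exp ((2*κH + 3*|ω|) * T) := by
        rw [e3]; ring
end
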